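/- arXiv:2411.17670 — 12 statements merged into one kernel-verified Lean document; each statement's English description precedes it below -/
import Mathlib

section
/- Let I ⊆ ℝ be an interval, let f : ℝ → ℝ be positive on I such that x ↦ log(f(x)) is completely monotone on I, and let g : ℝ → ℝ be completely monotone on I. Then the function x ↦ f(x)^{g(x)} is logarithmically completely monotone on I. -/
open Set Real Topology

def CompletelyMonotoneOn (f : ℝ → ℝ) (I : Set ℝ) : Prop :=
  ContDiffOn ℝ (⊤ : ℕ∞) f I ∧
    ∀ (n : ℕ), ∀ x ∈ I, 0 ≤ (-1 : ℝ) ^ n * iteratedDerivWithin n f I x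

def LogCompletelyMonotoneOn (f : ℝ → ℝ) (I : Set ℝ) : Prop :=
  (∀ x ∈ I, 0 < f x) ∧
  ContDiffOn ℝ (⊤ : ℕ∞) (fun x => Real.log (f x)) I ∧
    ∀ (n : ℕ), 1 ≤ n → ∀ x ∈ I,
      0 ≤ (-1 : ℝ) ^ n * iteratedDerivWithin n (fun x => Real.log (f x)) I x

lemma cm_neg_derivWithin {s : Set ℝ} (hs : UniqueDiffOn ℝ s) {f : ℝ → ℝ}
    (hf : CompletelyMonotoneOn f s) :
    CompletelyMonotoneOn (fun y => -derivWithin f s y) s := by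
  have hder : ContDiffOn ℝ (⊤ : ℕ∞) (derivWithin f s) s :=
    hf.1.derivWithin hs (by exact_mod_cast le_top)
  refine ⟨hder.neg, fun m x hx => ?_⟩
  rw [iteratedDerivWithin_fun_neg, ← iteratedDerivWithin_succ']
  have := hf.2 (m + 1) x hx
  rw [show (-1 : ℝ) ^ m * -iteratedDerivWithin (m + 1) f s x =
    (-1 : ℝ) ^ (m + 1) * iteratedDerivWithin (m + 1) f s x from by ring]
  exact this

lemma cm_mul_aux {s : Set ℝ} (hs : UniqueDiffOn ℝ s) :
    ∀ n : ℕ, ∀ f g : ℝ → ℝ, CompletelyMonotoneOn f s → CompletelyMonotoneOn g s →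
      ∀ x ∈ s, 0 ≤ (-1 : ℝ) ^ n * iteratedDerivWithin n (fun y => f y * g y) s x := by
  intro n
  induction n with
  | zero =>
    intro f g hf hg x hx
    have h1 := hf.2 0 x hx
    have h2 := hg.2 0 x hx
    simp only [iteratedDerivWithin_zero, pow_zero, one_mul] at h1 h2 ⊢
    exact mul_nonneg h1 h2
  | succ n IH =>
    intro f g hf hg x hx
    have hf' := cm_neg_derivWithin hs hf
    have hg' := cm_neg_derivWithin hs hg
    have hEq : Set.EqOn (derivWithin (fun y => f y * g y) s)
        (fun y => -((fun z => -derivWithin f s z) y * g y) +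
          -(f y * (fun z => -derivWithin g s z) y)) s := by
      intro y hy
      have hdf : DifferentiableWithinAt ℝ f s y :=
        (hf.1.differentiableOn (by simp)) y hy
      have hdg : DifferentiableWithinAt ℝ g s y :=
        (hg.1.differentiableOn (by simp)) y hy
      rw [derivWithin_fun_mul hdf hdg]
      ring
    have hc1 : ContDiffOn ℝ (⊤ : ℕ∞) (fun y => -((fun z => -derivWithin f s z) y * g y)) s :=
      (hf'.1.mul hg.1).neg
    have hc2 : ContDiffOn ℝ (⊤ : ℕ∞) (fun y => -(f y * (fun z => -derivWithin g s z) y)) s :=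
      (hf.1.mul hg'.1).neg
    have key : iteratedDerivWithin (n + 1) (fun y => f y * g y) s x =
        -iteratedDerivWithin n (fun y => (fun z => -derivWithin f s z) y * g y) s x +
        -iteratedDerivWithin n (fun y => f y * (fun z => -derivWithin g s z) y) s x := by
      rw [iteratedDerivWithin_succ',
        iteratedDerivWithin_congr hEq hx]
      have := iteratedDerivWithin_add (n := n) (f := fun y => -((fun z => -derivWithin f s z) y * g y))
        (g := fun y => -(f y * (fun z => -derivWithin g s z) y)) hx hs
        ((hc1.of_le (by exact_mod_cast le_top)) x hx) ((hc2.of_le (by exact_mod_cast le_top)) x hx)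
      rw [show ((fun y => -((fun z => -derivWithin f s z) y * g y)) +
          fun y => -(f y * (fun z => -derivWithin g s z) y)) =
          (fun y => -((fun z => -derivWithin f s z) y * g y) +
          -(f y * (fun z => -derivWithin g s z) y)) from rfl] at this
      rw [this, iteratedDerivWithin_fun_neg, iteratedDerivWithin_fun_neg]
    have h1 := IH (fun z => -derivWithin f s z) g hf' hg x hx
    have h2 := IH f (fun z => -derivWithin g s z) hf hg' x hx
    rw [key, show (-1 : ℝ) ^ (n + 1) *
      (-iteratedDerivWithin n (fun y => (fun z => -derivWithin f s z) y * g y) s x +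
        -iteratedDerivWithin n (fun y => f y * (fun z => -derivWithin g s z) y) s x) =
      (-1 : ℝ) ^ n * iteratedDerivWithin n (fun y => (fun z => -derivWithin f s z) y * g y) s x +
      (-1 : ℝ) ^ n * iteratedDerivWithin n (fun y => f y * (fun z => -derivWithin g s z) y) s x
      from by ring]
    linarith

lemma iteratedDerivWithin_succ_of_isolated {s : Set ℝ} {x : ℝ} {h : ℝ → ℝ} {n : ℕ}
    (hiso : 𝓝[s \ {x}] x = ⊥) :
    iteratedDerivWithin (n + 1) h s x = 0 := by
  rw [iteratedDerivWithin_eq_iteratedFDerivWithin, iteratedFDerivWithin_succ_apply_left,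
    fderivWithin_zero_of_not_accPt (by
      rw [AccPt, Filter.neBot_iff, not_not, ← hiso, nhdsWithin, nhdsWithin, inf_assoc,
        Filter.inf_principal, Set.diff_eq, Set.inter_comm])]
  simp

theorem rpow_log_completely_monotone (I : Set ℝ) (hI : I.OrdConnected)
    (f g : ℝ → ℝ) (hfpos : ∀ x ∈ I, 0 < f x)
    (hlogf : CompletelyMonotoneOn (fun x => Real.log (f x)) I)
    (hg : CompletelyMonotoneOn g I) :
    LogCompletelyMonotoneOn (fun x => f x ^ g x) I := by
  have hEq : Set.EqOn (fun x => Real.log (f x ^ g x))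
      (fun x => g x * Real.log (f x)) I := fun x hx =>
    Real.log_rpow (hfpos x hx) _
  refine ⟨fun x hx => Real.rpow_pos_of_pos (hfpos x hx) _,
    (hg.1.mul hlogf.1).congr hEq, ?_⟩
  intro n hn x hx
  by_cases hsub : I.Subsingleton
  · obtain ⟨m, rfl⟩ := Nat.exists_eq_add_of_le hn
    have hiso : 𝓝[I \ {x}] x = ⊥ := by
      have : I \ {x} = ∅ := by
        ext y
        simp only [Set.mem_diff, Set.mem_singleton_iff, Set.mem_empty_iff_false, iff_false,
          not_and, not_not]
        exact fun hy => hsub hy hx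
      rw [this, nhdsWithin_empty]
    rw [show 1 + m = m + 1 from by omega, iteratedDerivWithin_succ_of_isolated hiso]
    simp
  · have hconv : Convex ℝ I := convex_iff_ordConnected.mpr hI
    obtain ⟨a, ha, b, hb, hab⟩ := Set.not_subsingleton_iff.mp hsub
    rcases lt_or_gt_of_ne hab with hlt | hlt
    · have hIoo : Ioo a b ⊆ I := fun y hy => hI.out ha hb ⟨hy.1.le, hy.2.le⟩
      have hsI : UniqueDiffOn ℝ I :=
        uniqueDiffOn_convex hconv
          ⟨(a + b) / 2, interior_maximal hIoo isOpen_Ioo ⟨by linarith, by linarith⟩⟩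
      rw [iteratedDerivWithin_congr hEq hx]
      exact cm_mul_aux hsI n g (fun x => Real.log (f x)) hg hlogf x hx
    · have hIoo : Ioo b a ⊆ I := fun y hy => hI.out hb ha ⟨hy.1.le, hy.2.le⟩
      have hsI : UniqueDiffOn ℝ I :=
        uniqueDiffOn_convex hconv
          ⟨(a + b) / 2, interior_maximal hIoo isOpen_Ioo ⟨by linarith, by linarith⟩⟩
      rw [iteratedDerivWithin_congr hEq hx]
      exact cm_mul_aux hsI n g (fun x => Real.log (f x)) hg hlogf x hx
end

section
/- Let I ⊆ ℝ be an interval, let g : ℝ → ℝ satisfy g ≥ 0 on I and g' completely monotone on I, and let f : ℝ → ℝ be completely monotone on an interval containing the range g(I). Then the composition f∘g is completely monotone on I. -/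
open Set Real Topology

private lemma sign_step {a : ℝ} {n : ℕ} (h : 0 ≤ (-1 : ℝ) ^ n * a) :
    0 ≤ (-1 : ℝ) ^ (n + 1) * -a := by
  have e : (-1 : ℝ) ^ (n + 1) * -a = (-1) ^ n * a := by ring
  linarith

private lemma sign_step' {a : ℝ} {n : ℕ} (h : 0 ≤ (-1 : ℝ) ^ (n + 1) * a) :
    0 ≤ (-1 : ℝ) ^ n * -a := by
  have e : (-1 : ℝ) ^ n * -a = (-1) ^ (n + 1) * a := by ring
  linarith

private lemma natle (m : ℕ) : (m : WithTop ℕ∞) ≤ ((⊤ : ℕ∞) : WithTop ℕ∞) := by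
  exact_mod_cast le_top

private lemma iter_subsingleton {u : ℝ → ℝ} {S : Set ℝ} (hS : S.Subsingleton)
    {n : ℕ} (hn : n ≠ 0) {x : ℝ} (hx : x ∈ S) : iteratedDerivWithin n u S x = 0 := by
  obtain ⟨m, rfl⟩ := Nat.exists_eq_succ_of_ne_zero hn
  have hiso : 𝓝[S \ {x}] x = ⊥ := by
    have he : S \ {x} = ∅ := by
      ext y
      simp only [mem_diff, mem_singleton_iff, mem_empty_iff_false, iff_false, not_and, not_not]
      exact fun hy => hS hy hx
    simp [he]
  have h0 : iteratedFDerivWithin ℝ (m + 1) u S x = 0 := by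
    ext v
    rw [iteratedFDerivWithin_succ_apply_left, fderivWithin_zero_of_not_accPt (by rw [accPt_principal_iff_nhdsWithin, Filter.not_neBot]; exact hiso)]
    simp
  rw [iteratedDerivWithin_eq_iteratedFDerivWithin, h0]
  simp

private lemma sign_negDeriv {u : ℝ → ℝ} {S : Set ℝ} (hS : UniqueDiffOn ℝ S) {n : ℕ}
    (hus : ∀ k ≤ n + 1, ∀ x ∈ S, 0 ≤ (-1 : ℝ) ^ k * iteratedDerivWithin k u S x) :
    ∀ k ≤ n, ∀ x ∈ S,
      0 ≤ (-1 : ℝ) ^ k * iteratedDerivWithin k (fun y => -derivWithin u S y) S x := by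
  intro k hk x hx
  rw [iteratedDerivWithin_fun_neg, ← iteratedDerivWithin_succ']
  exact sign_step' (hus (k + 1) (Nat.succ_le_succ hk) x hx)

private lemma CM_negDeriv {u : ℝ → ℝ} {S : Set ℝ} (hS : UniqueDiffOn ℝ S)
    (hu : CompletelyMonotoneOn u S) :
    CompletelyMonotoneOn (fun y => -derivWithin u S y) S := by
  constructor
  · exact ((contDiffOn_infty_iff_derivWithin hS).1 hu.1).2.neg
  · intro n x hx
    exact sign_negDeriv hS (fun k _ y hy => hu.2 k y hy) n le_rfl x hx

private lemma mul_sign {S : Set ℝ} (hS : UniqueDiffOn ℝ S) :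
    ∀ (n : ℕ) (u v : ℝ → ℝ), ContDiffOn ℝ (⊤ : ℕ∞) u S → ContDiffOn ℝ (⊤ : ℕ∞) v S →
      (∀ k ≤ n, ∀ x ∈ S, 0 ≤ (-1 : ℝ) ^ k * iteratedDerivWithin k u S x) →
      (∀ k ≤ n, ∀ x ∈ S, 0 ≤ (-1 : ℝ) ^ k * iteratedDerivWithin k v S x) →
      ∀ k ≤ n, ∀ x ∈ S, 0 ≤ (-1 : ℝ) ^ k * iteratedDerivWithin k (fun y => u y * v y) S x := by
  intro n
  induction n with
  | zero =>
    intro u v _ _ hus hvs k hk x hx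
    have hk0 : k = 0 := Nat.le_zero.1 hk
    subst hk0
    simp only [iteratedDerivWithin_zero, pow_zero, one_mul]
    exact mul_nonneg (by simpa using hus 0 le_rfl x hx) (by simpa using hvs 0 le_rfl x hx)
  | succ n IH =>
    intro u v hu hv hus hvs k hk x hx
    rcases Nat.lt_or_ge k (n + 1) with h | h
    · exact IH u v hu hv (fun j hj => hus j (hj.trans (Nat.le_succ n)))
        (fun j hj => hvs j (hj.trans (Nat.le_succ n))) k (Nat.lt_succ_iff.1 h) x hx
    have hk' : k = n + 1 := le_antisymm hk h
    subst hk'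
    have hud : DifferentiableOn ℝ u S := hu.differentiableOn (by simp)
    have hvd : DifferentiableOn ℝ v S := hv.differentiableOn (by simp)
    have hu'c : ContDiffOn ℝ (⊤ : ℕ∞) (fun y => -derivWithin u S y) S :=
      ((contDiffOn_infty_iff_derivWithin hS).1 hu).2.neg
    have hv'c : ContDiffOn ℝ (⊤ : ℕ∞) (fun y => -derivWithin v S y) S :=
      ((contDiffOn_infty_iff_derivWithin hS).1 hv).2.neg
    have heq : Set.EqOn (derivWithin (fun y => u y * v y) S)
        (fun y => -((fun z => -derivWithin u S z) y * v y +
          u y * (fun z => -derivWithin v S z) y)) S := by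
      intro y hy
      have h := derivWithin_fun_mul (hud y hy) (hvd y hy)
      simp only [h]
      ring
    rw [iteratedDerivWithin_succ', iteratedDerivWithin_congr heq hx,
      iteratedDerivWithin_fun_neg]
    have c1 : ContDiffOn ℝ n (fun y => (fun z => -derivWithin u S z) y * v y) S :=
      (hu'c.mul hv).of_le (natle n)
    have c2 : ContDiffOn ℝ n (fun y => u y * (fun z => -derivWithin v S z) y) S :=
      (hu.mul hv'c).of_le (natle n)
    have hadd : iteratedDerivWithin n
        (fun y => (fun z => -derivWithin u S z) y * v y +
          u y * (fun z => -derivWithin v S z) y) S x =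
        iteratedDerivWithin n (fun y => (fun z => -derivWithin u S z) y * v y) S x +
        iteratedDerivWithin n (fun y => u y * (fun z => -derivWithin v S z) y) S x :=
      iteratedDerivWithin_fun_add hx hS (c1 x hx) (c2 x hx)
    rw [hadd]
    have hA := IH (fun z => -derivWithin u S z) v hu'c hv
      (sign_negDeriv hS hus) (fun j hj => hvs j (hj.trans (Nat.le_succ n))) n le_rfl x hx
    have hB := IH u (fun z => -derivWithin v S z) hu hv'c
      (fun j hj => hus j (hj.trans (Nat.le_succ n))) (sign_negDeriv hS hvs) n le_rfl x hx
    exact sign_step (by rw [mul_add]; exact add_nonneg hA hB)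

private lemma comp_sign (I J : Set ℝ) (hsI : UniqueDiffOn ℝ I) (hsJ : UniqueDiffOn ℝ J)
    (g : ℝ → ℝ) (hgc : ContDiffOn ℝ (⊤ : ℕ∞) g I) (hmaps : MapsTo g I J)
    (hg' : CompletelyMonotoneOn (derivWithin g I) I) :
    ∀ (n : ℕ) (F : ℝ → ℝ), CompletelyMonotoneOn F J →
      ∀ k ≤ n, ∀ x ∈ I, 0 ≤ (-1 : ℝ) ^ k * iteratedDerivWithin k (F ∘ g) I x := by
  intro n
  induction n with
  | zero =>
    intro F hF k hk x hx
    have hk0 : k = 0 := Nat.le_zero.1 hk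
    subst hk0
    simpa using hF.2 0 (g x) (hmaps hx)
  | succ n IH =>
    intro F hF k hk x hx
    rcases Nat.lt_or_ge k (n + 1) with h | h
    · exact IH F hF k (Nat.lt_succ_iff.1 h) x hx
    have hk' : k = n + 1 := le_antisymm hk h
    subst hk'
    have hgd : DifferentiableOn ℝ g I := hgc.differentiableOn (by simp)
    have hFd : DifferentiableOn ℝ F J := hF.1.differentiableOn (by simp)
    have heq : Set.EqOn (derivWithin (F ∘ g) I)
        (fun y => -(((fun z => -derivWithin F J z) ∘ g) y * derivWithin g I y)) I := by
      intro y hy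
      have h := derivWithin_comp y (hFd (g y) (hmaps hy)) (hgd y hy) hmaps
      simp only [h, Function.comp]
      ring
    rw [iteratedDerivWithin_succ', iteratedDerivWithin_congr heq hx,
      iteratedDerivWithin_fun_neg]
    have hF' : CompletelyMonotoneOn (fun z => -derivWithin F J z) J := CM_negDeriv hsJ hF
    have cu : ContDiffOn ℝ (⊤ : ℕ∞) ((fun z => -derivWithin F J z) ∘ g) I :=
      hF'.1.comp hgc hmaps
    have su : ∀ j ≤ n, ∀ y ∈ I,
        0 ≤ (-1 : ℝ) ^ j * iteratedDerivWithin j ((fun z => -derivWithin F J z) ∘ g) I y :=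
      fun j hj => IH (fun z => -derivWithin F J z) hF' j hj
    have sv : ∀ j ≤ n, ∀ y ∈ I,
        0 ≤ (-1 : ℝ) ^ j * iteratedDerivWithin j (derivWithin g I) I y :=
      fun j _ y hy => hg'.2 j y hy
    have hprod := mul_sign hsI n ((fun z => -derivWithin F J z) ∘ g) (derivWithin g I)
      cu hg'.1 su sv n le_rfl x hx
    exact sign_step hprod

private lemma udo_of_nontrivial {S : Set ℝ} (hS : S.OrdConnected) (h : S.Nontrivial) :
    UniqueDiffOn ℝ S := by
  obtain ⟨a, ha, b, hb, hab⟩ := h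
  rcases hab.lt_or_gt with h' | h'
  · exact uniqueDiffOn_convex (convex_iff_ordConnected.2 hS)
      ⟨(a + b) / 2, interior_mono (hS.out ha hb)
        (by rw [interior_Icc]; exact ⟨by linarith, by linarith⟩)⟩
  · exact uniqueDiffOn_convex (convex_iff_ordConnected.2 hS)
      ⟨(a + b) / 2, interior_mono (hS.out hb ha)
        (by rw [interior_Icc]; exact ⟨by linarith, by linarith⟩)⟩

theorem composition_completely_monotone (I J : Set ℝ)
    (hI : I.OrdConnected) (hJ : J.OrdConnected)
    (f g : ℝ → ℝ) (hg0 : ∀ x ∈ I, 0 ≤ g x)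
    (hgdiff : DifferentiableOn ℝ g I)
    (hg' : CompletelyMonotoneOn (derivWithin g I) I)
    (hrange : g '' I ⊆ J)
    (hf : CompletelyMonotoneOn f J) :
    CompletelyMonotoneOn (f ∘ g) I := by
  have hmaps : MapsTo g I J := fun x hx => hrange ⟨x, hx, rfl⟩
  by_cases hIs : I.Subsingleton
  · constructor
    · intro x hx
      exact contDiffWithinAt_singleton.mono (fun y hy => by
        simp only [mem_singleton_iff]; exact hIs hy hx)
    · intro n x hx
      cases n with
      | zero => simpa using hf.2 0 (g x) (hmaps hx)
      | succ m =>
        rw [iter_subsingleton hIs (Nat.succ_ne_zero m) hx]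
        simp
  · have hInt : I.Nontrivial := Set.not_subsingleton_iff.1 hIs
    have hIu : UniqueDiffOn ℝ I := udo_of_nontrivial hI hInt
    have hgc : ContDiffOn ℝ (⊤ : ℕ∞) g I :=
      (contDiffOn_infty_iff_derivWithin hIu).2 ⟨hgdiff, hg'.1⟩
    by_cases hJs : J.Subsingleton
    · obtain ⟨a, ha, -, -, -⟩ := hInt
      have hconst : ∀ y ∈ I, g y = g a := fun y hy => hJs (hmaps hy) (hmaps ha)
      have hEq : Set.EqOn (f ∘ g) (fun _ => f (g a)) I := fun y hy => by
        simp [Function.comp, hconst y hy]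
      constructor
      · exact (contDiffOn_const (c := f (g a))).congr hEq
      · intro n x hx
        rw [iteratedDerivWithin_congr hEq hx]
        cases n with
        | zero => simpa using hf.2 0 (g a) (hmaps ha)
        | succ m =>
          have h0 : iteratedDerivWithin (m + 1) (fun _ : ℝ => f (g a)) I x = 0 := by
            rw [iteratedDerivWithin_eq_iteratedFDerivWithin,
              iteratedFDerivWithin_const_of_ne (Nat.succ_ne_zero m) _ I]
            simp
          rw [h0]
          simp
    · have hJnt : J.Nontrivial := Set.not_subsingleton_iff.1 hJs
      have hJu : UniqueDiffOn ℝ J := udo_of_nontrivial hJ hJnt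
      constructor
      · exact hf.1.comp hgc hmaps
      · intro n x hx
        exact comp_sign I J hIu hJu g hgc hmaps hg' n f hf n le_rfl x hx
end

section
/- Let 0 < α ≤ 1, let 0 < b ≤ ∞, and let f : ℝ → ℝ be completely monotone on (0, b). Then the function x ↦ f(x^α) is completely monotone on (0, b^{1/α}) (on (0, ∞) if b = ∞). -/
open Set Real

noncomputable def cmc (α : ℝ) : ℕ → ℕ → ℝ
  | 0, 0 => 1
  | 0, _ + 1 => 0
  | _ + 1, 0 => 0
  | n + 1, k + 1 => α * cmc α n k + (((k : ℝ) + 1) * α - n) * cmc α n (k + 1)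

lemma cmc_top (α : ℝ) : ∀ n k, n < k → cmc α n k = 0 := by
  intro n
  induction n with
  | zero =>
    intro k hk
    cases k with
    | zero => omega
    | succ k => rfl
  | succ n IH =>
    intro k hk
    cases k with
    | zero => omega
    | succ k =>
      show α * cmc α n k + (((k : ℝ) + 1) * α - n) * cmc α n (k + 1) = 0
      rw [IH k (by omega), IH (k + 1) (by omega)]
      ring

lemma cmc_sign (α : ℝ) (hα : 0 ≤ α) (hα1 : α ≤ 1) :
    ∀ n k, 0 ≤ (-1 : ℝ) ^ (n + k) * cmc α n k := by
  intro n
  induction n with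
  | zero =>
    intro k
    cases k with
    | zero => simp [cmc]
    | succ k => simp [cmc]
  | succ n IH =>
    intro k
    cases k with
    | zero => simp [cmc]
    | succ k =>
      have h1 := IH k
      have h2 := IH (k + 1)
      have e1 : ((-1 : ℝ)) ^ (n + 1 + (k + 1)) = (-1) ^ (n + k) := by
        rw [show n + 1 + (k + 1) = (n + k) + 2 by omega, pow_add]
        norm_num
      rw [show cmc α (n + 1) (k + 1)
            = α * cmc α n k + (((k : ℝ) + 1) * α - n) * cmc α n (k + 1) from rfl, e1, mul_add]
      have t1 : 0 ≤ (-1 : ℝ) ^ (n + k) * (α * cmc α n k) := by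
        have : (-1 : ℝ) ^ (n + k) * (α * cmc α n k) = α * ((-1) ^ (n + k) * cmc α n k) := by ring
        rw [this]
        exact mul_nonneg hα h1
      have t2 : 0 ≤ (-1 : ℝ) ^ (n + k) * ((((k : ℝ) + 1) * α - n) * cmc α n (k + 1)) := by
        rcases le_or_gt (k + 1) n with h | h
        · have hc : (-1 : ℝ) ^ (n + k) * cmc α n (k + 1) ≤ 0 := by
            rw [show n + (k + 1) = (n + k) + 1 by omega, pow_succ] at h2
            nlinarith
          have hle : ((k : ℝ) + 1) * α - n ≤ 0 := by
            have hkn : ((k : ℝ) + 1) ≤ n := by exact_mod_cast h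
            nlinarith
          have : (-1 : ℝ) ^ (n + k) * ((((k : ℝ) + 1) * α - n) * cmc α n (k + 1))
              = (((k : ℝ) + 1) * α - n) * ((-1) ^ (n + k) * cmc α n (k + 1)) := by ring
          rw [this]
          exact mul_nonneg_of_nonpos_of_nonpos hle hc
        · rw [cmc_top α n (k + 1) h]
          simp
      linarith

lemma cmc_zero_mul (α : ℝ) (n : ℕ) : ((0 : ℝ) * α - n) * cmc α n 0 = 0 := by
  cases n with
  | zero => simp
  | succ n => simp [cmc]

lemma key_formula (α : ℝ) (hα : 0 < α) (f : ℝ → ℝ) (I J : Set ℝ)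
    (hI : IsOpen I) (hJ : IsOpen J)
    (hIpos : ∀ x ∈ I, (0 : ℝ) < x) (hmaps : ∀ x ∈ I, x ^ α ∈ J)
    (hf : ContDiffOn ℝ (⊤ : ℕ∞) f J) :
    ∀ n : ℕ, ∀ x ∈ I, iteratedDerivWithin n (fun x => f (x ^ α)) I x
      = ∑ k ∈ Finset.range (n + 1),
          cmc α n k * x ^ ((k : ℝ) * α - n) * iteratedDerivWithin k f J (x ^ α) := by
  intro n
  induction n with
  | zero =>
    intro x hx
    simp [cmc]
  | succ n IH =>
    intro x hx
    have hxpos := hIpos x hx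
    have hxJ := hmaps x hx
    set D : ℕ → ℝ → ℝ := fun k => iteratedDerivWithin k f J with hD
    have hDdiff : ∀ k : ℕ, DifferentiableAt ℝ (D k) (x ^ α) := by
      intro k
      have h1 : DifferentiableOn ℝ (D k) J :=
        hf.differentiableOn_iteratedDerivWithin (by exact_mod_cast WithTop.coe_lt_top k)
          hJ.uniqueDiffOn
      exact (h1 _ hxJ).differentiableAt (hJ.mem_nhds hxJ)
    have hDderiv : ∀ k : ℕ, deriv (D k) (x ^ α) = D (k + 1) (x ^ α) := by
      intro k
      rw [show D (k + 1) (x ^ α) = derivWithin (D k) J (x ^ α) from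
          congrFun iteratedDerivWithin_succ _,
        derivWithin_of_isOpen hJ hxJ]
    have hrpow : HasDerivAt (fun y : ℝ => y ^ α) (α * x ^ (α - 1)) x :=
      Real.hasDerivAt_rpow_const (Or.inl hxpos.ne')
    have hterm : ∀ k : ℕ, HasDerivAt
        (fun y => cmc α n k * y ^ ((k : ℝ) * α - n) * D k (y ^ α))
        (cmc α n k * (((k : ℝ) * α - n) * x ^ ((k : ℝ) * α - n - 1)) * D k (x ^ α)
          + cmc α n k * x ^ ((k : ℝ) * α - n) * (D (k + 1) (x ^ α) * (α * x ^ (α - 1)))) x := by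
      intro k
      have h1 : HasDerivAt (fun y : ℝ => y ^ ((k : ℝ) * α - n))
          (((k : ℝ) * α - n) * x ^ ((k : ℝ) * α - n - 1)) x :=
        Real.hasDerivAt_rpow_const (Or.inl hxpos.ne')
      have h2 : HasDerivAt (fun y => D k (y ^ α)) (D (k + 1) (x ^ α) * (α * x ^ (α - 1))) x := by
        have h3 := ((hDdiff k).hasDerivAt).comp x hrpow
        rwa [hDderiv k] at h3
      exact (h1.const_mul (cmc α n k)).mul h2
    have hsum : HasDerivAt
        (fun y => ∑ k ∈ Finset.range (n + 1),
          cmc α n k * y ^ ((k : ℝ) * α - n) * D k (y ^ α))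
        (∑ k ∈ Finset.range (n + 1),
          (cmc α n k * (((k : ℝ) * α - n) * x ^ ((k : ℝ) * α - n - 1)) * D k (x ^ α)
            + cmc α n k * x ^ ((k : ℝ) * α - n) * (D (k + 1) (x ^ α) * (α * x ^ (α - 1))))) x :=
      HasDerivAt.fun_sum fun k _ => hterm k
    have hstep : iteratedDerivWithin (n + 1) (fun x => f (x ^ α)) I x
        = deriv (iteratedDerivWithin n (fun x => f (x ^ α)) I) x := by
      rw [iteratedDerivWithin_succ, derivWithin_of_isOpen hI hx]
    have heq : iteratedDerivWithin n (fun x => f (x ^ α)) I =ᶠ[nhds x]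
        (fun y => ∑ k ∈ Finset.range (n + 1),
          cmc α n k * y ^ ((k : ℝ) * α - n) * D k (y ^ α)) :=
      Filter.eventuallyEq_of_mem (hI.mem_nhds hx) IH
    rw [hstep, heq.deriv_eq, hsum.deriv]
    -- now pure algebra with sums
    rw [Finset.sum_add_distrib]
    have e1 : ∀ k ∈ Finset.range (n + 1),
        cmc α n k * (((k : ℝ) * α - n) * x ^ ((k : ℝ) * α - n - 1)) * D k (x ^ α)
          = ((k : ℝ) * α - n) * cmc α n k * x ^ ((k : ℝ) * α - ((n : ℝ) + 1)) * D k (x ^ α) := by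
      intro k _
      rw [show (k : ℝ) * α - n - 1 = (k : ℝ) * α - ((n : ℝ) + 1) by ring]
      ring
    have e2 : ∀ k ∈ Finset.range (n + 1),
        cmc α n k * x ^ ((k : ℝ) * α - n) * (D (k + 1) (x ^ α) * (α * x ^ (α - 1)))
          = α * cmc α n k * x ^ (((k : ℝ) + 1) * α - ((n : ℝ) + 1)) * D (k + 1) (x ^ α) := by
      intro k _
      rw [show ((k : ℝ) + 1) * α - ((n : ℝ) + 1) = ((k : ℝ) * α - n) + (α - 1) by ring,
        Real.rpow_add hxpos]
      ring
    rw [Finset.sum_congr rfl e1, Finset.sum_congr rfl e2]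
    have hA : ∑ k ∈ Finset.range (n + 1),
        ((k : ℝ) * α - n) * cmc α n k * x ^ ((k : ℝ) * α - ((n : ℝ) + 1)) * D k (x ^ α)
        = ∑ k ∈ Finset.range (n + 1),
          (((k : ℝ) + 1) * α - n) * cmc α n (k + 1) * x ^ (((k : ℝ) + 1) * α - ((n : ℝ) + 1))
            * D (k + 1) (x ^ α) := by
      rw [Finset.sum_range_succ'
        (fun k => ((k : ℝ) * α - n) * cmc α n k * x ^ ((k : ℝ) * α - ((n : ℝ) + 1)) * D k (x ^ α)) n,
        Finset.sum_range_succ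
        (fun k => (((k : ℝ) + 1) * α - n) * cmc α n (k + 1) * x ^ (((k : ℝ) + 1) * α - ((n : ℝ) + 1))
          * D (k + 1) (x ^ α)) n]
      have hA0 : (((0 : ℕ) : ℝ) * α - (n : ℝ)) * cmc α n 0
          * x ^ (((0 : ℕ) : ℝ) * α - ((n : ℝ) + 1)) * D 0 (x ^ α) = 0 := by
        have : (((0 : ℕ) : ℝ) * α - (n : ℝ)) * cmc α n 0 = 0 := by
          simpa using cmc_zero_mul α n
        rw [this, zero_mul, zero_mul]
      have hAn : (((n : ℕ) : ℝ) + 1) * α - (n : ℝ) = (((n : ℕ) : ℝ) + 1) * α - (n : ℝ) := rfl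
      rw [hA0, cmc_top α n (n + 1) (Nat.lt_succ_self n)]
      simp only [mul_zero, zero_mul, add_zero]
      refine Finset.sum_congr rfl fun k _ => ?_
      push_cast
      ring_nf
    rw [hA, Finset.sum_range_succ'
      (fun k => cmc α (n + 1) k * x ^ ((k : ℝ) * α - ((n : ℕ) + 1 : ℕ)) * D k (x ^ α)) (n + 1),
      ← Finset.sum_add_distrib]
    have hT0 : cmc α (n + 1) 0 * x ^ (((0 : ℕ) : ℝ) * α - ((n : ℕ) + 1 : ℕ)) * D 0 (x ^ α) = 0 := by
      simp [cmc]
    rw [hT0, add_zero]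
    refine Finset.sum_congr rfl fun k _ => ?_
    rw [show cmc α (n + 1) (k + 1)
        = α * cmc α n k + (((k : ℝ) + 1) * α - n) * cmc α n (k + 1) from rfl]
    push_cast
    ring_nf
theorem completely_monotone_comp_rpow (α : ℝ) (hα : 0 < α) (hα1 : α ≤ 1)
    (b : EReal) (hb : 0 < b) (f : ℝ → ℝ)
    (hf : CompletelyMonotoneOn f {x : ℝ | 0 < x ∧ (x : EReal) < b}) :
    CompletelyMonotoneOn (fun x => f (x ^ α))
      {x : ℝ | 0 < x ∧ ((x ^ α : ℝ) : EReal) < b} := by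
  set J : Set ℝ := {x : ℝ | 0 < x ∧ (x : EReal) < b} with hJdef
  set I : Set ℝ := {x : ℝ | 0 < x ∧ ((x ^ α : ℝ) : EReal) < b} with hIdef
  have hIpos : ∀ x ∈ I, (0 : ℝ) < x := fun x hx => hx.1
  have hmaps : ∀ x ∈ I, x ^ α ∈ J := fun x hx => ⟨Real.rpow_pos_of_pos hx.1 α, hx.2⟩
  have hJopen : IsOpen J := by
    have : J = Ioi (0 : ℝ) ∩ (fun y : ℝ => (y : EReal)) ⁻¹' Iio b := by
      ext y; simp [hJdef, Set.mem_setOf_eq]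
    rw [this]
    exact isOpen_Ioi.inter (isOpen_Iio.preimage continuous_coe_real_ereal)
  have hIopen : IsOpen I := by
    rw [isOpen_iff_mem_nhds]
    intro x hx
    have h1 : ContinuousAt (fun y : ℝ => ((y ^ α : ℝ) : EReal)) x :=
      continuous_coe_real_ereal.continuousAt.comp
        (Real.continuousAt_rpow_const x α (Or.inl hx.1.ne'))
    have h2 : (fun y : ℝ => ((y ^ α : ℝ) : EReal)) ⁻¹' Iio b ∈ nhds x :=
      h1.preimage_mem_nhds (isOpen_Iio.mem_nhds hx.2)
    have h3 : Ioi (0 : ℝ) ∈ nhds x := isOpen_Ioi.mem_nhds hx.1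
    filter_upwards [h2, h3] with y hy1 hy2
    exact ⟨hy2, hy1⟩
  constructor
  · refine hf.1.comp (fun x hx =>
      (Real.contDiffAt_rpow_const_of_ne (hIpos x hx).ne').contDiffWithinAt) ?_
    exact fun x hx => hmaps x hx
  · intro n x hx
    rw [key_formula α hα f I J hIopen hJopen hIpos hmaps hf.1 n x hx, Finset.mul_sum]
    refine Finset.sum_nonneg fun k _ => ?_
    have h1 : (0 : ℝ) ≤ (-1) ^ (n + k) * cmc α n k := cmc_sign α hα.le hα1 n k
    have h2 : (0 : ℝ) < x ^ ((k : ℝ) * α - n) := Real.rpow_pos_of_pos hx.1 _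
    have h3 : (0 : ℝ) ≤ (-1) ^ k * iteratedDerivWithin k f J (x ^ α) :=
      hf.2 k _ (hmaps x hx)
    have hnk : ((-1 : ℝ)) ^ (n + k) * (-1) ^ k = (-1) ^ n := by
      rw [← pow_add, add_assoc, pow_add, Even.neg_one_pow ⟨k, rfl⟩, mul_one]
    have hid : (-1 : ℝ) ^ n
          * (cmc α n k * x ^ ((k : ℝ) * α - n) * iteratedDerivWithin k f J (x ^ α))
        = ((-1) ^ (n + k) * cmc α n k) * x ^ ((k : ℝ) * α - n)
          * ((-1) ^ k * iteratedDerivWithin k f J (x ^ α)) := by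
      rw [← hnk]
      ring
    rw [hid]
    exact mul_nonneg (mul_nonneg h1 h2.le) h3
end

section
/- Let f : ℝ → ℝ be positive on an interval (a, b). If f is logarithmically completely monotone on (a, b), then f is completely monotone on (a, b). -/
open Set Real

open Set Real

section Aux

variable {s : Set ℝ}

lemma hle_top {n : ℕ} : (n : WithTop ℕ∞) ≤ ((⊤ : ℕ∞) : WithTop ℕ∞) := by
  exact_mod_cast le_top

lemma hle_one : (1 : WithTop ℕ∞) ≤ ((⊤ : ℕ∞) : WithTop ℕ∞) := by exact_mod_cast le_top

lemma hle_succ_top : ((⊤ : ℕ∞) : WithTop ℕ∞) + 1 ≤ ((⊤ : ℕ∞) : WithTop ℕ∞) := le_of_eq rfl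

lemma itdw_const_one (hs : UniqueDiffOn ℝ s) {x : ℝ} (hx : x ∈ s) (m : ℕ) :
    0 ≤ (-1 : ℝ) ^ m * iteratedDerivWithin m (fun _ => (1 : ℝ)) s x := by
  cases m with
  | zero => simp
  | succ m =>
    rw [iteratedDerivWithin_eq_iteratedFDerivWithin,
      iteratedFDerivWithin_const_of_ne (Nat.succ_ne_zero m) (1 : ℝ) s]
    simp

/-- sign property of `-derivWithin p s` from that of `p` (orders ≥ 1 suffice). -/
lemma negDeriv_sign (hs : UniqueDiffOn ℝ s)
    (p : ℝ → ℝ) (hp : ∀ m : ℕ, 1 ≤ m → ∀ x ∈ s, 0 ≤ (-1 : ℝ) ^ m * iteratedDerivWithin m p s x)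
    (m : ℕ) {x : ℝ} (hx : x ∈ s) :
    0 ≤ (-1 : ℝ) ^ m * iteratedDerivWithin m (fun y => -derivWithin p s y) s x := by
  have h1 : iteratedDerivWithin m (fun y => -derivWithin p s y) s x
      = -iteratedDerivWithin m (derivWithin p s) s x :=
    iteratedDerivWithin_fun_neg _
  have h2 : iteratedDerivWithin (m + 1) p s x = iteratedDerivWithin m (derivWithin p s) s x :=
    congrFun iteratedDerivWithin_succ' x
  have := hp (m + 1) (Nat.le_add_left 1 m) x hx
  rw [h2] at this
  rw [h1]
  calc (0:ℝ) ≤ (-1) ^ (m+1) * iteratedDerivWithin m (derivWithin p s) s x := this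
  _ = (-1) ^ m * -iteratedDerivWithin m (derivWithin p s) s x := by ring

/-- product of completely monotone functions is completely monotone (sign part). -/
lemma cm_mul (hs : UniqueDiffOn ℝ s) :
    ∀ (n : ℕ) (p q : ℝ → ℝ), ContDiffOn ℝ ((⊤ : ℕ∞)) p s → ContDiffOn ℝ ((⊤ : ℕ∞)) q s →
    (∀ m : ℕ, ∀ x ∈ s, 0 ≤ (-1 : ℝ) ^ m * iteratedDerivWithin m p s x) →
    (∀ m : ℕ, ∀ x ∈ s, 0 ≤ (-1 : ℝ) ^ m * iteratedDerivWithin m q s x) →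
    ∀ x ∈ s, 0 ≤ (-1 : ℝ) ^ n * iteratedDerivWithin n (fun y => p y * q y) s x := by
  intro n
  induction n with
  | zero =>
    intro p q _ _ hp2 hq2 x hx
    simpa using mul_nonneg (by simpa using hp2 0 x hx) (by simpa using hq2 0 x hx)
  | succ n IH =>
    intro p q hp hq hp2 hq2 x hx
    set p' : ℝ → ℝ := fun y => -derivWithin p s y with hp'def
    set q' : ℝ → ℝ := fun y => -derivWithin q s y with hq'def
    have hp' : ContDiffOn ℝ ((⊤ : ℕ∞)) p' s := (hp.derivWithin hs hle_succ_top).neg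
    have hq' : ContDiffOn ℝ ((⊤ : ℕ∞)) q' s := (hq.derivWithin hs hle_succ_top).neg
    have hp'2 : ∀ m : ℕ, ∀ x ∈ s, 0 ≤ (-1 : ℝ) ^ m * iteratedDerivWithin m p' s x :=
      fun m x hx => negDeriv_sign hs p (fun m _ => hp2 m) m hx
    have hq'2 : ∀ m : ℕ, ∀ x ∈ s, 0 ≤ (-1 : ℝ) ^ m * iteratedDerivWithin m q' s x :=
      fun m x hx => negDeriv_sign hs q (fun m _ => hq2 m) m hx
    have heq : Set.EqOn (derivWithin (fun y => p y * q y) s)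
        (fun y => -((fun z => p' z * q z) y + (fun z => p z * q' z) y)) s := by
      intro y hy
      rw [derivWithin_fun_mul (hp.differentiableOn (ne_of_gt (lt_of_lt_of_le zero_lt_one hle_one)) y hy)
        (hq.differentiableOn (ne_of_gt (lt_of_lt_of_le zero_lt_one hle_one)) y hy)]
      simp [hp'def, hq'def]; ring
    have hA : ContDiffOn ℝ ((n : WithTop ℕ∞)) (fun z => p' z * q z) s :=
      (hp'.mul hq).of_le hle_top
    have hB : ContDiffOn ℝ ((n : WithTop ℕ∞)) (fun z => p z * q' z) s :=
      (hp.mul hq').of_le hle_top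
    have key : iteratedDerivWithin (n + 1) (fun y => p y * q y) s x
        = -(iteratedDerivWithin n (fun z => p' z * q z) s x
            + iteratedDerivWithin n (fun z => p z * q' z) s x) := by
      rw [iteratedDerivWithin_succ',
        iteratedDerivWithin_congr heq hx,
        iteratedDerivWithin_fun_neg _]
      exact congrArg Neg.neg (iteratedDerivWithin_add hx hs (hA x hx) (hB x hx))
    rw [key]
    have h1 := IH p' q hp' hq hp'2 hq2 x hx
    have h2 := IH p q' hp hq' hp2 hq'2 x hx
    calc (0:ℝ) ≤ (-1) ^ n * iteratedDerivWithin n (fun z => p' z * q z) s x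
        + (-1) ^ n * iteratedDerivWithin n (fun z => p z * q' z) s x := add_nonneg h1 h2
      _ = (-1) ^ (n+1) * -(iteratedDerivWithin n (fun z => p' z * q z) s x
            + iteratedDerivWithin n (fun z => p z * q' z) s x) := by ring

lemma key_lemma (hs : UniqueDiffOn ℝ s) (g : ℝ → ℝ) (hg : ContDiffOn ℝ ((⊤ : ℕ∞)) g s)
    (hgs : ∀ m : ℕ, 1 ≤ m → ∀ x ∈ s, 0 ≤ (-1 : ℝ) ^ m * iteratedDerivWithin m g s x) :
    ∀ (n : ℕ) (p : ℝ → ℝ), ContDiffOn ℝ ((⊤ : ℕ∞)) p s →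
    (∀ m : ℕ, ∀ x ∈ s, 0 ≤ (-1 : ℝ) ^ m * iteratedDerivWithin m p s x) →
    ∀ x ∈ s, 0 ≤ (-1 : ℝ) ^ n * iteratedDerivWithin n (fun y => p y * Real.exp (g y)) s x := by
  have hF : ContDiffOn ℝ ((⊤ : ℕ∞)) (fun y => Real.exp (g y)) s :=
    Real.contDiff_exp.comp_contDiffOn hg
  have hg' : ContDiffOn ℝ ((⊤ : ℕ∞)) (fun y => -derivWithin g s y) s :=
    (hg.derivWithin hs hle_succ_top).neg
  have hg'2 : ∀ m : ℕ, ∀ x ∈ s,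
      0 ≤ (-1 : ℝ) ^ m * iteratedDerivWithin m (fun y => -derivWithin g s y) s x :=
    fun m x hx => negDeriv_sign hs g hgs m hx
  have hFd : ∀ x ∈ s, derivWithin (fun y => Real.exp (g y)) s x
      = Real.exp (g x) * derivWithin g s x := by
    intro x hx
    exact ((Real.hasDerivAt_exp (g x)).comp_hasDerivWithinAt x
      ((hg.differentiableOn (ne_of_gt (lt_of_lt_of_le zero_lt_one hle_one)) x hx).hasDerivWithinAt)).derivWithin (hs x hx)
  intro n
  induction n with
  | zero =>
    intro p _ hp2 x hx
    simpa using mul_nonneg (by simpa using hp2 0 x hx) (Real.exp_pos (g x)).le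
  | succ n IH =>
    intro p hp hp2 x hx
    set q : ℝ → ℝ := fun y => -derivWithin p s y + p y * (-derivWithin g s y) with hqdef
    have hq : ContDiffOn ℝ ((⊤ : ℕ∞)) q s :=
      ((hp.derivWithin hs hle_succ_top).neg).add (hp.mul hg')
    have hq2 : ∀ m : ℕ, ∀ x ∈ s, 0 ≤ (-1 : ℝ) ^ m * iteratedDerivWithin m q s x := by
      intro m x hx
      have hA : ContDiffOn ℝ ((m : WithTop ℕ∞)) (fun y => -derivWithin p s y) s :=
        ((hp.derivWithin hs hle_succ_top).neg).of_le hle_top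
      have hB : ContDiffOn ℝ ((m : WithTop ℕ∞)) (fun y => p y * (-derivWithin g s y)) s :=
        (hp.mul hg').of_le hle_top
      have hsum : iteratedDerivWithin m q s x
          = iteratedDerivWithin m (fun y => -derivWithin p s y) s x
            + iteratedDerivWithin m (fun y => p y * (-derivWithin g s y)) s x :=
        iteratedDerivWithin_add hx hs (hA x hx) (hB x hx)
      have h1 := negDeriv_sign hs p (fun m _ => hp2 m) m hx
      have h2 := cm_mul hs m p (fun y => -derivWithin g s y) hp hg' hp2 hg'2 x hx
      rw [hsum]
      calc (0:ℝ) ≤ (-1) ^ m * iteratedDerivWithin m (fun y => -derivWithin p s y) s x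
          + (-1) ^ m * iteratedDerivWithin m (fun y => p y * (-derivWithin g s y)) s x :=
        add_nonneg h1 h2
        _ = _ := by ring
    have heq : Set.EqOn (derivWithin (fun y => p y * Real.exp (g y)) s)
        (fun y => -(q y * Real.exp (g y))) s := by
      intro y hy
      rw [derivWithin_fun_mul (hp.differentiableOn (ne_of_gt (lt_of_lt_of_le zero_lt_one hle_one)) y hy)
        (hF.differentiableOn (ne_of_gt (lt_of_lt_of_le zero_lt_one hle_one)) y hy), hFd y hy]
      simp [hqdef]; ring
    have key : iteratedDerivWithin (n + 1) (fun y => p y * Real.exp (g y)) s x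
        = -iteratedDerivWithin n (fun y => q y * Real.exp (g y)) s x := by
      rw [iteratedDerivWithin_succ',
        iteratedDerivWithin_congr heq hx,
        iteratedDerivWithin_fun_neg _]
    rw [key]
    have := IH q hq hq2 x hx
    calc (0:ℝ) ≤ (-1) ^ n * iteratedDerivWithin n (fun y => q y * Real.exp (g y)) s x := this
      _ = (-1) ^ (n+1) * -iteratedDerivWithin n (fun y => q y * Real.exp (g y)) s x := by ring

end Aux

theorem log_completely_monotone_implies_completely_monotone (a b : ℝ)
    (f : ℝ → ℝ) (hfpos : ∀ x ∈ Set.Ioo a b, 0 < f x)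
    (hf : LogCompletelyMonotoneOn f (Set.Ioo a b)) :
    CompletelyMonotoneOn f (Set.Ioo a b) := by
  obtain ⟨hpos, hgsmooth, hgsign⟩ := hf
  set s := Set.Ioo a b
  have hs : UniqueDiffOn ℝ s := (isOpen_Ioo).uniqueDiffOn
  set g : ℝ → ℝ := fun x => Real.log (f x) with hgdef
  have hEq : Set.EqOn f (fun y => (fun _ => (1:ℝ)) y * Real.exp (g y)) s := by
    intro y hy
    simp [hgdef, Real.exp_log (hfpos y hy)]
  have hF : ContDiffOn ℝ ((⊤ : ℕ∞)) (fun y => (fun _ => (1:ℝ)) y * Real.exp (g y)) s :=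
    (contDiffOn_const).mul (Real.contDiff_exp.comp_contDiffOn hgsmooth)
  constructor
  · exact hF.congr fun x hx => hEq hx
  · intro n x hx
    rw [iteratedDerivWithin_congr hEq hx]
    exact key_lemma hs g hgsmooth hgsign n (fun _ => (1:ℝ)) contDiffOn_const
      (fun m x hx => itdw_const_one hs hx m) x hx
end

section
/- Let I ⊆ ℝ be an interval, let g : ℝ → ℝ be such that -g' is completely monotone on I, and let f : ℝ → ℝ be absolutely monotone on an interval containing the range g(I). Then the composition f∘g is completely monotone on I. -/
open Set Real Topology Filter

def AbsolutelyMonotoneOn' (f : ℝ → ℝ) (I : Set ℝ) : Prop :=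
  ContDiffOn ℝ (⊤ : ℕ∞) f I ∧
    ∀ (n : ℕ), ∀ x ∈ I, 0 ≤ iteratedDerivWithin n f I x

private lemma iteratedDerivWithin_isolated {f : ℝ → ℝ} {s : Set ℝ} {x : ℝ}
    (h : 𝓝[s \ {x}] x = ⊥) (n : ℕ) : iteratedDerivWithin (n + 1) f s x = 0 := by
  rw [iteratedDerivWithin_eq_iteratedFDerivWithin, iteratedFDerivWithin_succ_apply_left,
    fderivWithin_zero_of_not_accPt (by rw [accPt_principal_iff_nhdsWithin, not_neBot]; exact h)]
  simp

private lemma iteratedDerivWithin_const'' {s : Set ℝ} (hs : UniqueDiffOn ℝ s) :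
    ∀ (n : ℕ) (c : ℝ) {x : ℝ}, x ∈ s → iteratedDerivWithin (n + 1) (fun _ => c) s x = 0 := by
  intro n
  induction n with
  | zero =>
    intro c x hx
    rw [iteratedDerivWithin_succ']
    have : Set.EqOn (derivWithin (fun _ => c) s) (fun _ => (0 : ℝ)) s := fun y hy =>
      by simp
    rw [iteratedDerivWithin_congr this hx, iteratedDerivWithin_zero]
  | succ n IH =>
    intro c x hx
    rw [iteratedDerivWithin_succ']
    have : Set.EqOn (derivWithin (fun _ => c) s) (fun _ => (0 : ℝ)) s := fun y hy =>
      by simp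
    rw [iteratedDerivWithin_congr this hx]
    exact IH 0 hx

private lemma pascal_sum (a b : ℕ → ℝ) (n : ℕ) :
    (∑ k ∈ Finset.range (n + 1), (n.choose k : ℝ) * a (k + 1) * b (n - k)) +
      ∑ k ∈ Finset.range (n + 1), (n.choose k : ℝ) * a k * b (n + 1 - k) =
      ∑ k ∈ Finset.range (n + 2), ((n + 1).choose k : ℝ) * a k * b (n + 1 - k) := by
  rw [Finset.sum_range_succ' (fun k => ((n + 1).choose k : ℝ) * a k * b (n + 1 - k)) (n + 1),
    Finset.sum_range_succ' (fun k => (n.choose k : ℝ) * a k * b (n + 1 - k)) n]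
  have hsplit : ∑ k ∈ Finset.range (n + 1), (((n + 1).choose (k + 1) : ℝ)) * a (k + 1) * b (n + 1 - (k + 1))
      = ∑ k ∈ Finset.range (n + 1), ((n.choose k : ℝ) * a (k + 1) * b (n - k)
        + (n.choose (k + 1) : ℝ) * a (k + 1) * b (n - k)) := by
    refine Finset.sum_congr rfl fun k hk => ?_
    rw [Nat.succ_sub_succ, Nat.choose_succ_succ' n k]
    push_cast; ring
  rw [hsplit, Finset.sum_add_distrib]
  have hlast : ∑ k ∈ Finset.range (n + 1), ((n.choose (k + 1) : ℝ)) * a (k + 1) * b (n - k)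
      = ∑ k ∈ Finset.range n, ((n.choose (k + 1) : ℝ)) * a (k + 1) * b (n + 1 - (k + 1)) := by
    rw [Finset.sum_range_succ]
    simp only [Nat.choose_succ_self, Nat.cast_zero, zero_mul, add_zero]
    exact Finset.sum_congr rfl fun k hk => by rw [Nat.succ_sub_succ]
  rw [hlast]
  simp only [Nat.choose_zero_right, Nat.cast_one]
  ring

private lemma leibniz_within {s : Set ℝ} (hs : UniqueDiffOn ℝ s) (n : ℕ) :
    ∀ (u v : ℝ → ℝ), ContDiffOn ℝ (⊤ : ℕ∞) u s → ContDiffOn ℝ (⊤ : ℕ∞) v s →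
      ∀ x ∈ s, iteratedDerivWithin n (fun y => u y * v y) s x =
        ∑ k ∈ Finset.range (n + 1),
          (n.choose k : ℝ) * iteratedDerivWithin k u s x * iteratedDerivWithin (n - k) v s x := by
  induction n with
  | zero => intro u v hu hv x hx; simp
  | succ n IH =>
    intro u v hu hv x hx
    have hud : DifferentiableOn ℝ u s := hu.differentiableOn (by simp)
    have hvd : DifferentiableOn ℝ v s := hv.differentiableOn (by simp)
    have hu' : ContDiffOn ℝ (⊤ : ℕ∞) (derivWithin u s) s :=
      ((contDiffOn_infty_iff_derivWithin hs).mp hu).2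
    have hv' : ContDiffOn ℝ (⊤ : ℕ∞) (derivWithin v s) s :=
      ((contDiffOn_infty_iff_derivWithin hs).mp hv).2
    have hcongr : Set.EqOn (derivWithin (fun y => u y * v y) s)
        ((fun y => derivWithin u s y * v y) + fun y => u y * derivWithin v s y) s := by
      intro y hy
      exact derivWithin_fun_mul (hud y hy) (hvd y hy)
    rw [iteratedDerivWithin_succ', iteratedDerivWithin_congr hcongr hx,
      iteratedDerivWithin_add hx hs (((hu'.mul hv).of_le (by exact_mod_cast (le_top : (n : ℕ∞) ≤ ⊤))) x hx)
        (((hu.mul hv').of_le (by exact_mod_cast (le_top : (n : ℕ∞) ≤ ⊤))) x hx),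
      IH _ _ hu' hv x hx, IH _ _ hu hv' x hx]
    have e1 : ∀ k, iteratedDerivWithin k (derivWithin u s) s x = iteratedDerivWithin (k + 1) u s x :=
      fun k => by rw [iteratedDerivWithin_succ']
    have e2 : ∀ k, iteratedDerivWithin k (derivWithin v s) s x = iteratedDerivWithin (k + 1) v s x :=
      fun k => by rw [iteratedDerivWithin_succ']
    simp only [e1, e2]
    have e3 : ∀ k ∈ Finset.range (n + 1),
        (n.choose k : ℝ) * iteratedDerivWithin k u s x * iteratedDerivWithin (n - k + 1) v s x =
        (n.choose k : ℝ) * iteratedDerivWithin k u s x * iteratedDerivWithin (n + 1 - k) v s x := by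
      intro k hk
      have hk' : k < n + 1 := Finset.mem_range.mp hk
      have : n - k + 1 = n + 1 - k := by omega
      rw [this]
    rw [Finset.sum_congr rfl e3]
    exact pascal_sum (fun k => iteratedDerivWithin k u s x) (fun k => iteratedDerivWithin k v s x) n

theorem composition_abs_monotone_completely_monotone (I J : Set ℝ)
    (hI : I.OrdConnected) (hJ : J.OrdConnected)
    (f g : ℝ → ℝ)
    (hgdiff : DifferentiableOn ℝ g I)
    (hg' : CompletelyMonotoneOn (fun x => -(derivWithin g I x)) I)
    (hrange : g '' I ⊆ J)
    (hf : AbsolutelyMonotoneOn' f J) :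
    CompletelyMonotoneOn (f ∘ g) I := by
  have hmap : Set.MapsTo g I J := Set.mapsTo_iff_image_subset.mpr hrange
  by_cases hIsub : I.Subsingleton
  · constructor
    · intro x hx
      have hsub : I ⊆ {x} := fun y hy => hIsub hy hx
      have hev : (f ∘ g) =ᶠ[𝓝[I] x] fun _ => f (g x) := by
        filter_upwards [self_mem_nhdsWithin] with y hy
        simp [Function.comp, hIsub hy hx]
      exact (contDiffWithinAt_const.congr_of_eventuallyEq hev (by simp)).mono (fun y hy => hy)
    · intro n x hx
      match n with
      | 0 => simpa using hf.2 0 (g x) (hmap hx)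
      | (n + 1) =>
        have hiso : 𝓝[I \ {x}] x = ⊥ := by
          have : I \ {x} = ∅ := by
            apply Set.eq_empty_iff_forall_notMem.mpr
            rintro y ⟨hy, hy'⟩
            exact hy' (hIsub hy hx)
          rw [this]; simp
        rw [iteratedDerivWithin_isolated hiso]
        simp
  · -- I has two distinct points; it is convex with nonempty interior.
    obtain ⟨a, ha, b, hb, hab⟩ := Set.not_subsingleton_iff.mp hIsub
    have hUI : UniqueDiffOn ℝ I := by
      rcases lt_or_gt_of_ne hab with h | h
      · refine uniqueDiffOn_convex (convex_iff_ordConnected.mpr hI) ⟨(a + b) / 2, ?_⟩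
        have : Ioo a b ⊆ interior I :=
          interior_maximal (Set.Ioo_subset_Icc_self.trans (hI.out ha hb)) isOpen_Ioo
        exact this (by constructor <;> linarith)
      · refine uniqueDiffOn_convex (convex_iff_ordConnected.mpr hI) ⟨(a + b) / 2, ?_⟩
        have : Ioo b a ⊆ interior I :=
          interior_maximal (Set.Ioo_subset_Icc_self.trans (hI.out hb ha)) isOpen_Ioo
        exact this (by constructor <;> linarith)
    have hgderiv : ContDiffOn ℝ (⊤ : ℕ∞) (derivWithin g I) I := by
      have := hg'.1.neg
      simpa using this
    have hgsmooth : ContDiffOn ℝ (⊤ : ℕ∞) g I :=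
      (contDiffOn_infty_iff_derivWithin hUI).mpr ⟨hgdiff, hgderiv⟩
    by_cases hJsub : J.Subsingleton
    · -- g is constant on I
      have hconst : ∀ x ∈ I, g x = g a := fun x hx => hJsub (hmap hx) (hmap ha)
      have heq : Set.EqOn (f ∘ g) (fun _ => f (g a)) I := by
        intro y hy; simp [Function.comp, hconst y hy]
      constructor
      · exact contDiffOn_const.congr heq
      · intro n x hx
        match n with
        | 0 =>
          simp only [pow_zero, one_mul, iteratedDerivWithin_zero, Function.comp]
          simpa using hf.2 0 (g x) (hmap hx)
        | (n + 1) =>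
          rw [iteratedDerivWithin_congr heq hx, iteratedDerivWithin_const'' hUI n _ hx]
          simp
    · -- J also has two distinct points
      obtain ⟨c, hc, d, hd, hcd⟩ := Set.not_subsingleton_iff.mp hJsub
      have hUJ : UniqueDiffOn ℝ J := by
        rcases lt_or_gt_of_ne hcd with h | h
        · refine uniqueDiffOn_convex (convex_iff_ordConnected.mpr hJ) ⟨(c + d) / 2, ?_⟩
          have : Ioo c d ⊆ interior J :=
            interior_maximal (Set.Ioo_subset_Icc_self.trans (hJ.out hc hd)) isOpen_Ioo
          exact this (by constructor <;> linarith)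
        · refine uniqueDiffOn_convex (convex_iff_ordConnected.mpr hJ) ⟨(c + d) / 2, ?_⟩
          have : Ioo d c ⊆ interior J :=
            interior_maximal (Set.Ioo_subset_Icc_self.trans (hJ.out hd hc)) isOpen_Ioo
          exact this (by constructor <;> linarith)
      have key : ∀ n : ℕ, ∀ F : ℝ → ℝ, ContDiffOn ℝ (⊤ : ℕ∞) F J →
          (∀ m : ℕ, ∀ y ∈ J, 0 ≤ iteratedDerivWithin m F J y) →
          ∀ x ∈ I, 0 ≤ (-1 : ℝ) ^ n * iteratedDerivWithin n (F ∘ g) I x := by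
        intro n
        induction n using Nat.strong_induction_on with
        | _ n IH =>
          intro F hFs hFm x hx
          match n with
          | 0 => simpa using hFm 0 (g x) (hmap hx)
          | (n + 1) =>
            set F' := derivWithin F J with hF'def
            set G : ℝ → ℝ := fun y => -(derivWithin g I y) with hGdef
            have hF' : ContDiffOn ℝ (⊤ : ℕ∞) F' J :=
              ((contDiffOn_infty_iff_derivWithin hUJ).mp hFs).2
            have hF'm : ∀ m : ℕ, ∀ y ∈ J, 0 ≤ iteratedDerivWithin m F' J y := by
              intro m y hy
              have := hFm (m + 1) y hy
              rwa [iteratedDerivWithin_succ'] at this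
            have hcomp : ContDiffOn ℝ (⊤ : ℕ∞) (F' ∘ g) I := hF'.comp hgsmooth hmap
            have hcongr : Set.EqOn (derivWithin (F ∘ g) I)
                (fun y => -((F' ∘ g) y * G y)) I := by
              intro y hy
              have := derivWithin_comp (x := y) (hFs.differentiableOn (by simp) (g y) (hmap hy))
                (hgdiff y hy) hmap
              simp only [this, hGdef, Function.comp]
              ring
            rw [iteratedDerivWithin_succ', iteratedDerivWithin_congr hcongr hx,
              iteratedDerivWithin_fun_neg (fun y => (F' ∘ g) y * G y),
              leibniz_within hUI n (F' ∘ g) G hcomp hg'.1 x hx]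
            rw [show ((-1 : ℝ)) ^ (n + 1) * -(∑ k ∈ Finset.range (n + 1),
                (n.choose k : ℝ) * iteratedDerivWithin k (F' ∘ g) I x *
                  iteratedDerivWithin (n - k) G I x) =
                (-1 : ℝ) ^ n * ∑ k ∈ Finset.range (n + 1),
                ((n.choose k : ℝ) * iteratedDerivWithin k (F' ∘ g) I x *
                  iteratedDerivWithin (n - k) G I x) by ring]
            rw [Finset.mul_sum]
            apply Finset.sum_nonneg
            intro k hk
            have hkn : k ≤ n := Nat.lt_succ_iff.mp (Finset.mem_range.mp hk)
            have hsign : ((-1 : ℝ)) ^ n = (-1 : ℝ) ^ k * (-1 : ℝ) ^ (n - k) := by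
              rw [← pow_add]; congr 1; omega
            have h1 : 0 ≤ (-1 : ℝ) ^ k * iteratedDerivWithin k (F' ∘ g) I x :=
              IH k (Nat.lt_succ_of_le hkn) F' hF' hF'm x hx
            have h2 : 0 ≤ (-1 : ℝ) ^ (n - k) * iteratedDerivWithin (n - k) G I x :=
              hg'.2 (n - k) x hx
            calc (0 : ℝ) ≤ (n.choose k : ℝ) *
                (((-1 : ℝ) ^ k * iteratedDerivWithin k (F' ∘ g) I x) *
                  ((-1 : ℝ) ^ (n - k) * iteratedDerivWithin (n - k) G I x)) := by positivity
              _ = (-1 : ℝ) ^ n * ((n.choose k : ℝ) * iteratedDerivWithin k (F' ∘ g) I x *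
                  iteratedDerivWithin (n - k) G I x) := by rw [hsign]; ring
      exact ⟨hf.1.comp hgsmooth hmap, fun n x hx => key n f hf.1 hf.2 x hx⟩
end

section
/- Let a < b be real numbers and let f : ℝ → ℝ be absolutely monotone on the open interval (a, b). Then f extends analytically to the complex plane: there exists a function F : ℂ → ℂ that is analytic on the open disc {z ∈ ℂ : |z - a| < b - a} and satisfies F(x) = f(x) for all real x ∈ (a, b). -/
open Set Real Filter Nat Topology

section helpers
variable {f : ℝ → ℝ} {a b : ℝ}

lemma myIteratedDerivWithin_of_isOpen {s : Set ℝ} (hs : IsOpen s) (n : ℕ) {x : ℝ} (hx : x ∈ s) :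
    iteratedDerivWithin n f s x = iteratedDeriv n f x := by
  rw [iteratedDerivWithin_eq_iteratedFDerivWithin, iteratedDeriv_eq_iteratedFDeriv,
    iteratedFDerivWithin_of_isOpen n hs hx]

lemma myIteratedDerivWithin_Icc_eq (hf : ContDiffOn ℝ (⊤:ℕ∞) f (Ioo a b)) {t x : ℝ}
    (ht : t ∈ Ioo a b) (hx : x ∈ Ioo a b) (htx : t < x) (k : ℕ) {y : ℝ} (hy : y ∈ Icc t x) :
    iteratedDerivWithin k f (Icc t x) y = iteratedDeriv k f y := by
  have hIoo : UniqueDiffOn ℝ (Ioo a b) := isOpen_Ioo.uniqueDiffOn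
  have hsub : Icc t x ⊆ Ioo a b := Icc_subset_Ioo ht.1 hx.2
  have H := (hf.ftaylorSeriesWithin hIoo).mono hsub
  have h1 := H.eq_iteratedFDerivWithin_of_uniqueDiffOn (m := k) (by exact_mod_cast le_top) (uniqueDiffOn_Icc htx) hy
  have h2 : ftaylorSeriesWithin ℝ f (Ioo a b) y k = iteratedFDeriv ℝ k f y :=
    iteratedFDerivWithin_of_isOpen k isOpen_Ioo (hsub hy)
  rw [iteratedDerivWithin_eq_iteratedFDerivWithin, iteratedDeriv_eq_iteratedFDeriv, ← h1, h2]

end helpers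

section facts
variable {f : ℝ → ℝ} {a b : ℝ}

lemma myDiffOn (hf : ContDiffOn ℝ (⊤:ℕ∞) f (Ioo a b)) (n : ℕ) :
    DifferentiableOn ℝ (iteratedDeriv n f) (Ioo a b) := by
  have h := hf.differentiableOn_iteratedDerivWithin (m := n)
    (by exact_mod_cast ENat.coe_lt_top n) isOpen_Ioo.uniqueDiffOn
  exact h.congr (fun x hx => (myIteratedDerivWithin_of_isOpen isOpen_Ioo n hx).symm)

lemma myNonneg (hf : ContDiffOn ℝ (⊤:ℕ∞) f (Ioo a b))
    (hf2 : ∀ (n : ℕ), ∀ x ∈ Ioo a b, 0 ≤ iteratedDerivWithin n f (Ioo a b) x)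
    (n : ℕ) {x : ℝ} (hx : x ∈ Ioo a b) : 0 ≤ iteratedDeriv n f x := by
  rw [← myIteratedDerivWithin_of_isOpen isOpen_Ioo n hx]; exact hf2 n x hx

lemma myMono (hf : ContDiffOn ℝ (⊤:ℕ∞) f (Ioo a b))
    (hf2 : ∀ (n : ℕ), ∀ x ∈ Ioo a b, 0 ≤ iteratedDerivWithin n f (Ioo a b) x)
    (n : ℕ) : MonotoneOn (iteratedDeriv n f) (Ioo a b) := by
  apply monotoneOn_of_deriv_nonneg (convex_Ioo a b) (myDiffOn hf n).continuousOn
  · rw [interior_Ioo]; exact myDiffOn hf n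
  · intro x hx
    rw [interior_Ioo] at hx
    rw [← iteratedDeriv_succ]
    exact myNonneg hf hf2 (n+1) hx

lemma myTaylor (hf : ContDiffOn ℝ (⊤:ℕ∞) f (Ioo a b)) {t x : ℝ}
    (ht : t ∈ Ioo a b) (hx : x ∈ Ioo a b) (htx : t < x) (n : ℕ) :
    ∃ ξ ∈ Ioo t x, f x - ∑ k ∈ Finset.range (n+1), iteratedDeriv k f t / k ! * (x - t)^k
      = iteratedDeriv (n+1) f ξ * (x - t)^(n+1) / (n+1)! := by
  have hsub : Icc t x ⊆ Ioo a b := Icc_subset_Ioo ht.1 hx.2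
  have hC : ContDiffOn ℝ n f (Icc t x) := (hf.mono hsub).of_le (by exact_mod_cast le_top)
  have hD : DifferentiableOn ℝ (iteratedDerivWithin n f (Icc t x)) (Ioo t x) := by
    have h := (hf.mono hsub).differentiableOn_iteratedDerivWithin (m := n)
      (by exact_mod_cast ENat.coe_lt_top n) (uniqueDiffOn_Icc htx)
    exact h.mono Ioo_subset_Icc_self
  obtain ⟨ξ, hξ, h⟩ := taylor_mean_remainder_lagrange htx.ne (by rwa [uIcc_of_le htx.le])
    (by rwa [uIcc_of_le htx.le, uIoo_of_le htx.le])
  rw [uIcc_of_le htx.le] at h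
  rw [uIoo_of_le htx.le] at hξ
  refine ⟨ξ, hξ, ?_⟩
  rw [taylor_within_apply] at h
  rw [myIteratedDerivWithin_Icc_eq hf ht hx htx (n+1) (Ioo_subset_Icc_self hξ)] at h
  rw [← h]
  congr 1
  apply Finset.sum_congr rfl
  intro k hk
  rw [myIteratedDerivWithin_Icc_eq hf ht hx htx k (left_mem_Icc.2 htx.le)]
  rw [smul_eq_mul]; ring

end facts

section series
variable {f : ℝ → ℝ} {a b : ℝ}

lemma myPartialLe (hf : ContDiffOn ℝ (⊤:ℕ∞) f (Ioo a b))
    (hf2 : ∀ (n : ℕ), ∀ x ∈ Ioo a b, 0 ≤ iteratedDerivWithin n f (Ioo a b) x)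
    {t x : ℝ} (ht : t ∈ Ioo a b) (hx : x ∈ Ioo a b) (htx : t < x) (n : ℕ) :
    ∑ k ∈ Finset.range (n+1), iteratedDeriv k f t / k ! * (x - t)^k ≤ f x := by
  obtain ⟨ξ, hξ, h⟩ := myTaylor hf ht hx htx n
  have hξab : ξ ∈ Ioo a b := ⟨lt_trans ht.1 hξ.1, lt_trans hξ.2 hx.2⟩
  have h1 : (0:ℝ) ≤ iteratedDeriv (n+1) f ξ * (x - t)^(n+1) / (n+1)! := by
    have h0 := myNonneg hf hf2 (n+1) hξab
    exact div_nonneg (mul_nonneg h0 (pow_nonneg (by linarith) _)) (by positivity)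
  linarith

lemma myTermNonneg (hf : ContDiffOn ℝ (⊤:ℕ∞) f (Ioo a b))
    (hf2 : ∀ (n : ℕ), ∀ x ∈ Ioo a b, 0 ≤ iteratedDerivWithin n f (Ioo a b) x)
    {t : ℝ} (ht : t ∈ Ioo a b) {r : ℝ} (hr : 0 ≤ r) (k : ℕ) :
    0 ≤ iteratedDeriv k f t / k ! * r^k := by
  have := myNonneg hf hf2 k ht
  positivity

lemma myTermLe (hf : ContDiffOn ℝ (⊤:ℕ∞) f (Ioo a b))
    (hf2 : ∀ (n : ℕ), ∀ x ∈ Ioo a b, 0 ≤ iteratedDerivWithin n f (Ioo a b) x)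
    {t x : ℝ} (ht : t ∈ Ioo a b) (hx : x ∈ Ioo a b) (htx : t < x) (k : ℕ) :
    iteratedDeriv k f t / k ! * (x - t)^k ≤ f x := by
  refine le_trans ?_ (myPartialLe hf hf2 ht hx htx k)
  refine Finset.single_le_sum (f := fun j => iteratedDeriv j f t / j ! * (x - t)^j)
    (fun j _ => myTermNonneg hf hf2 ht (by linarith : (0:ℝ) ≤ x - t) j) ?_
  simp

lemma mySummable (hf : ContDiffOn ℝ (⊤:ℕ∞) f (Ioo a b))
    (hf2 : ∀ (n : ℕ), ∀ x ∈ Ioo a b, 0 ≤ iteratedDerivWithin n f (Ioo a b) x)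
    {t : ℝ} (ht : t ∈ Ioo a b) {r : ℝ} (hr0 : 0 ≤ r) (hrb : r < b - t) :
    Summable (fun k => iteratedDeriv k f t / k ! * r^k) := by
  rcases eq_or_lt_of_le hr0 with h0 | hpos
  · apply summable_of_ne_finset_zero (s := {0})
    intro k hk
    simp only [Finset.mem_singleton] at hk
    rw [← h0, zero_pow hk, mul_zero]
  · set x := t + r with hxdef
    have hx : x ∈ Ioo a b := ⟨lt_trans ht.1 (by linarith), by linarith [ht.2.le]⟩
    have htx : t < x := by simp [hxdef]; linarith
    have hfx0 : 0 ≤ f x := by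
      have h0 := myTermLe hf hf2 ht hx htx 0
      have h1 := myTermNonneg hf hf2 ht (le_of_lt hpos) 0
      simp only [hxdef, add_sub_cancel_left] at h0
      linarith
    apply summable_of_sum_range_le (c := f x)
      (fun k => myTermNonneg hf hf2 ht hr0 k)
    intro n
    rcases n with _ | m
    · simpa using hfx0
    · have := myPartialLe hf hf2 ht hx htx m
      simpa [hxdef] using this

lemma myTendsto (hf : ContDiffOn ℝ (⊤:ℕ∞) f (Ioo a b))
    (hf2 : ∀ (n : ℕ), ∀ x ∈ Ioo a b, 0 ≤ iteratedDerivWithin n f (Ioo a b) x)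
    {t x : ℝ} (ht : t ∈ Ioo a b) (hx1 : t ≤ x) (hx2 : x < (t+b)/2) :
    Tendsto (fun n => ∑ k ∈ Finset.range (n+1), iteratedDeriv k f t / k ! * (x - t)^k)
      atTop (𝓝 (f x)) := by
  rcases eq_or_lt_of_le hx1 with rfl | htx
  · have : ∀ n : ℕ, ∑ k ∈ Finset.range (n+1), iteratedDeriv k f t / k ! * (t - t)^k = f t := by
      intro n
      rw [Finset.sum_eq_single 0]
      · simp
      · intro k _ hk; rw [sub_self, zero_pow hk, mul_zero]
      · simp
    simp only [this]
    exact tendsto_const_nhds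
  · have hxab : x ∈ Ioo a b := ⟨lt_of_lt_of_le ht.1 hx1, by linarith [ht.1]⟩
    set d : ℝ := (b - t)/2 with hd
    have hd0 : 0 < d := by simp [hd]; linarith [ht.2]
    set y : ℝ := x + d with hy
    have hxy : x < y := by simp [hy]; linarith
    have hyab : y ∈ Ioo a b := ⟨lt_trans hxab.1 hxy, by simp [hy, hd]; linarith⟩
    set ρ : ℝ := (x - t)/d with hρ
    have hρ0 : 0 ≤ ρ := div_nonneg (by linarith) hd0.le
    have hρ1 : ρ < 1 := by rw [hρ, div_lt_one hd0]; simp [hd]; linarith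
    have hxt : x - t = ρ * d := by rw [hρ, div_mul_cancel₀ _ hd0.ne']
    have key : ∀ n : ℕ, f x - ∑ k ∈ Finset.range (n+1), iteratedDeriv k f t / k ! * (x - t)^k
        ≤ f y * ρ^(n+1) := by
      intro n
      obtain ⟨ξ, hξ, h⟩ := myTaylor hf ht hxab htx n
      have hξab : ξ ∈ Ioo a b := ⟨lt_trans ht.1 hξ.1, lt_trans hξ.2 hxab.2⟩
      have hmono := myMono hf hf2 (n+1) hξab hxab hξ.2.le
      have hterm := myTermLe hf hf2 hxab hyab hxy (n+1)
      have hyx : y - x = d := by simp [hy]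
      rw [hyx] at hterm
      have hpow : (0:ℝ) ≤ (x - t)^(n+1) / (n+1)! := div_nonneg (pow_nonneg (by linarith) _) (by positivity)
      have h2 : iteratedDeriv (n+1) f ξ * (x - t)^(n+1) / (n+1)!
          ≤ iteratedDeriv (n+1) f x * (x - t)^(n+1) / (n+1)! := by
        rw [mul_div_assoc, mul_div_assoc]
        exact mul_le_mul_of_nonneg_right hmono hpow
      have h3 : iteratedDeriv (n+1) f x * (x - t)^(n+1) / (n+1)!
          = (iteratedDeriv (n+1) f x / (n+1)! * d^(n+1)) * ρ^(n+1) := by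
        rw [hxt, mul_pow]; ring
      have h4 : (iteratedDeriv (n+1) f x / (n+1)! * d^(n+1)) * ρ^(n+1) ≤ f y * ρ^(n+1) :=
        mul_le_mul_of_nonneg_right hterm (by positivity)
      rw [h] ; rw [h3] at h2; linarith
    have key0 : ∀ n : ℕ,
        0 ≤ f x - ∑ k ∈ Finset.range (n+1), iteratedDeriv k f t / k ! * (x - t)^k := by
      intro n
      have := myPartialLe hf hf2 ht hxab htx n
      linarith
    have hlim : Tendsto (fun n : ℕ => f y * ρ ^ (n+1)) atTop (𝓝 0) := by
      have h5 := ((tendsto_pow_atTop_nhds_zero_of_lt_one hρ0 hρ1).const_mul (f y)).comp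
        (tendsto_add_atTop_nat 1)
      simpa [Function.comp_def] using h5
    have hsq : Tendsto (fun n : ℕ => f x - ∑ k ∈ Finset.range (n+1),
        iteratedDeriv k f t / k ! * (x - t)^k) atTop (𝓝 0) :=
      squeeze_zero key0 key hlim
    have := hsq.const_sub (f x)
    simpa using this

end series

section complexpart
variable {f : ℝ → ℝ} {a b : ℝ}

noncomputable def myQ (f : ℝ → ℝ) (t : ℝ) : FormalMultilinearSeries ℂ ℂ ℂ :=
  FormalMultilinearSeries.ofScalars ℂ (fun k => ((iteratedDeriv k f t / k ! : ℝ) : ℂ))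

noncomputable def myG (f : ℝ → ℝ) (t : ℝ) : ℂ → ℂ := fun z => (myQ f t).sum (z - (t:ℂ))

lemma myRadius (hf : ContDiffOn ℝ (⊤:ℕ∞) f (Ioo a b))
    (hf2 : ∀ (n : ℕ), ∀ x ∈ Ioo a b, 0 ≤ iteratedDerivWithin n f (Ioo a b) x)
    {t : ℝ} (ht : t ∈ Ioo a b) :
    ENNReal.ofReal (b - t) ≤ (myQ f t).radius := by
  apply ENNReal.le_of_forall_nnreal_lt
  intro r hr
  have hrb : (r:ℝ) < b - t := by
    have := (ENNReal.lt_ofReal_iff_toReal_lt (by simp)).1 hr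
    simpa using this
  apply FormalMultilinearSeries.le_radius_of_summable
  have hnorm : ∀ n : ℕ, ‖myQ f t n‖ * (r:ℝ)^n = iteratedDeriv n f t / n ! * (r:ℝ)^n := by
    intro n
    rw [myQ, FormalMultilinearSeries.ofScalars_norm]
    rw [Complex.norm_real, Real.norm_eq_abs,
      abs_of_nonneg (div_nonneg (myNonneg hf hf2 n ht) (Nat.cast_nonneg _))]
  simp only [hnorm]
  exact mySummable hf hf2 ht r.coe_nonneg hrb

lemma myHasFP (hf : ContDiffOn ℝ (⊤:ℕ∞) f (Ioo a b))
    (hf2 : ∀ (n : ℕ), ∀ x ∈ Ioo a b, 0 ≤ iteratedDerivWithin n f (Ioo a b) x)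
    {t : ℝ} (ht : t ∈ Ioo a b) (hab : a < b) :
    HasFPowerSeriesOnBall (myG f t) (myQ f t) (t:ℂ) (myQ f t).radius := by
  have hpos : 0 < (myQ f t).radius :=
    lt_of_lt_of_le (by simp [ENNReal.ofReal_pos]; linarith [ht.2]) (myRadius hf hf2 ht)
  have h := ((myQ f t).hasFPowerSeriesOnBall hpos).comp_sub (t:ℂ)
  rw [zero_add] at h
  exact h

lemma myGAnalytic (hf : ContDiffOn ℝ (⊤:ℕ∞) f (Ioo a b))
    (hf2 : ∀ (n : ℕ), ∀ x ∈ Ioo a b, 0 ≤ iteratedDerivWithin n f (Ioo a b) x)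
    {t : ℝ} (ht : t ∈ Ioo a b) (hab : a < b) :
    AnalyticOnNhd ℂ (myG f t) (Metric.ball (t:ℂ) (b - t)) := by
  apply (myHasFP hf hf2 ht hab).analyticOnNhd.mono
  intro z hz
  rw [Metric.mem_ball] at hz
  rw [EMetric.mem_ball]
  calc edist z (t:ℂ) < ENNReal.ofReal (b - t) := edist_lt_ofReal.2 hz
    _ ≤ (myQ f t).radius := myRadius hf hf2 ht

lemma myGVal (hf : ContDiffOn ℝ (⊤:ℕ∞) f (Ioo a b))
    (hf2 : ∀ (n : ℕ), ∀ x ∈ Ioo a b, 0 ≤ iteratedDerivWithin n f (Ioo a b) x)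
    {t : ℝ} (ht : t ∈ Ioo a b) {x : ℝ} (hx1 : t ≤ x) (hx2 : x < (t+b)/2) :
    myG f t (x:ℂ) = (f x : ℂ) := by
  have hsum : Summable (fun k => iteratedDeriv k f t / k ! * (x - t)^k) :=
    mySummable hf hf2 ht (by linarith) (by linarith [ht.2])
  have htsum : (∑' k, iteratedDeriv k f t / k ! * (x - t)^k) = f x := by
    have h1 := hsum.hasSum.tendsto_sum_nat.comp (tendsto_add_atTop_nat 1)
    have h2 := myTendsto hf hf2 ht hx1 hx2
    exact tendsto_nhds_unique (by simpa [Function.comp_def] using h1) h2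
  have hcast : (x:ℂ) - (t:ℂ) = ((x - t : ℝ) : ℂ) := by push_cast; ring
  rw [myG, hcast, FormalMultilinearSeries.sum]
  simp only [myQ, FormalMultilinearSeries.ofScalars_apply_eq]
  calc (∑' n : ℕ, ((iteratedDeriv n f t / n ! : ℝ) : ℂ) • ((x - t : ℝ) : ℂ)^n)
      = ∑' n : ℕ, ((iteratedDeriv n f t / n ! * (x - t)^n : ℝ) : ℂ) := by
        apply tsum_congr; intro n; push_cast [smul_eq_mul]; ring
    _ = (((∑' n : ℕ, iteratedDeriv n f t / n ! * (x - t)^n : ℝ)) : ℂ) :=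
        (Complex.ofReal_tsum _).symm
    _ = (f x : ℂ) := by rw [htsum]

end complexpart

section identity
variable {f : ℝ → ℝ} {a b : ℝ}

lemma myBallSubset {s t : ℝ} (hst : s ≤ t) :
    Metric.ball (t:ℂ) (b - t) ⊆ Metric.ball (s:ℂ) (b - s) := by
  intro z hz
  rw [Metric.mem_ball] at *
  have hd : dist (t:ℂ) (s:ℂ) = t - s := by
    rw [Complex.isometry_ofReal.dist_eq, Real.dist_eq, abs_of_nonneg (by linarith)]
  calc dist z (s:ℂ) ≤ dist z (t:ℂ) + dist (t:ℂ) (s:ℂ) := dist_triangle _ _ _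
    _ < (b - t) + (t - s) := by rw [hd]; linarith
    _ = b - s := by ring

lemma myStep (hf : ContDiffOn ℝ (⊤:ℕ∞) f (Ioo a b))
    (hf2 : ∀ (n : ℕ), ∀ x ∈ Ioo a b, 0 ≤ iteratedDerivWithin n f (Ioo a b) x)
    (hab : a < b) {s t : ℝ} (hs : s ∈ Ioo a b) (ht : t ∈ Ioo a b) (hst : s ≤ t)
    (hhalf : t < (s+b)/2) :
    EqOn (myG f s) (myG f t) (Metric.ball (t:ℂ) (b - t)) := by
  have hGs := (myGAnalytic hf hf2 hs hab).mono (myBallSubset hst)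
  have hGt := myGAnalytic hf hf2 ht hab
  apply hGs.eqOn_of_preconnected_of_frequently_eq hGt
    (convex_ball (t:ℂ) (b-t)).isPreconnected
    (Metric.mem_ball_self (by linarith [ht.2]))
  set δ : ℝ := min ((s+b)/2) ((t+b)/2) - t with hδ
  have hδ0 : 0 < δ := by
    rw [hδ, lt_sub_iff_add_lt, zero_add, lt_min_iff]
    exact ⟨hhalf, by linarith [ht.2]⟩
  have hseq : Tendsto (fun j : ℕ => ((t + δ/(j+2) : ℝ) : ℂ)) atTop (𝓝[≠] (t:ℂ)) := by
    rw [tendsto_nhdsWithin_iff]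
    constructor
    · have h1 : Tendsto (fun j : ℕ => t + δ/(j+2)) atTop (𝓝 t) := by
        have h2 := (tendsto_const_div_atTop_nhds_zero_nat δ).comp (tendsto_add_atTop_nat 2)
        have h3 : Tendsto (fun j : ℕ => δ/(j+2)) atTop (𝓝 0) := by
          convert h2 using 2 with j
          simp [Function.comp]
        have := h3.const_add t
        simpa using this
      exact (Complex.continuous_ofReal.tendsto t).comp h1
    · refine Filter.Eventually.of_forall (fun j => ?_)
      simp only [mem_compl_iff, mem_singleton_iff]
      intro hcontra
      have : t + δ/(j+2) = t := by exact_mod_cast hcontra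
      have hj : (0:ℝ) < δ/(j+2) := by positivity
      linarith
  apply hseq.frequently
  refine Filter.Frequently.of_forall (fun j => ?_)
  have hjlt : δ/((j:ℝ)+2) < δ := div_lt_self hδ0 (by have := Nat.cast_nonneg (α := ℝ) j; linarith)
  have hjpos : (0:ℝ) < δ/((j:ℝ)+2) := by positivity
  have hmin1 : δ ≤ (s+b)/2 - t := by rw [hδ]; gcongr; exact min_le_left _ _
  have hmin2 : δ ≤ (t+b)/2 - t := by rw [hδ]; gcongr; exact min_le_right _ _
  have h1 := myGVal hf hf2 hs (x := t + δ/(j+2)) (by linarith) (by linarith)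
  have h2 := myGVal hf hf2 ht (x := t + δ/(j+2)) (by linarith) (by linarith)
  rw [h1, h2]

end identity

lemma myChain (hf : ContDiffOn ℝ (⊤:ℕ∞) f (Ioo a b))
    (hf2 : ∀ (n : ℕ), ∀ x ∈ Ioo a b, 0 ≤ iteratedDerivWithin n f (Ioo a b) x)
    (hab : a < b) {s t : ℝ} (hs : s ∈ Ioo a b) (ht : t ∈ Ioo a b) (hst : s ≤ t) :
    EqOn (myG f s) (myG f t) (Metric.ball (t:ℂ) (b - t)) := by
  classical
  set u : ℕ → ℝ := fun k => b - (b - s) * (2/3)^k with hu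
  have hbs : 0 < b - s := by linarith [hs.2]
  have hu0 : u 0 = s := by simp [hu]
  have hpowpos : ∀ k : ℕ, (0:ℝ) < (2/3)^k := fun k => pow_pos (by norm_num) k
  have humem : ∀ k, u k ∈ Ioo a b := by
    intro k
    constructor
    · have h1 : (2/3:ℝ)^k ≤ 1 := pow_le_one₀ (by norm_num) (by norm_num)
      have h2 := hs.1
      simp only [hu]
      nlinarith
    · simp only [hu]
      nlinarith [hpowpos k]
  have humono : ∀ k, u k ≤ u (k+1) := by
    intro k
    simp only [hu, pow_succ]
    nlinarith [hpowpos k]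
  have huhalf : ∀ k, u (k+1) < (u k + b)/2 := by
    intro k
    simp only [hu, pow_succ]
    nlinarith [hpowpos k]
  have main : ∀ k, EqOn (myG f s) (myG f (u k)) (Metric.ball ((u k : ℝ):ℂ) (b - u k)) := by
    intro k
    induction k with
    | zero => rw [hu0]; exact fun z _ => rfl
    | succ k ih =>
      have hstep := myStep hf hf2 hab (humem k) (humem (k+1)) (humono k) (huhalf k)
      intro z hz
      exact (ih (myBallSubset (humono k) hz)).trans (hstep hz)
  have hlim : ∃ k, t < u k := by
    obtain ⟨k, hk⟩ := exists_pow_lt_of_lt_one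
      (show (0:ℝ) < (b - t)/(b - s) from div_pos (by linarith [ht.2]) hbs)
      (by norm_num : (2/3:ℝ) < 1)
    refine ⟨k, ?_⟩
    have := (lt_div_iff₀ hbs).1 hk
    simp only [hu]
    nlinarith
  set K := Nat.find hlim with hK
  have hKspec : t < u K := Nat.find_spec hlim
  have hKpos : K ≠ 0 := by
    intro h
    rw [h, hu0] at hKspec
    linarith
  obtain ⟨k, hkK⟩ : ∃ k, K = k + 1 :=
    ⟨K - 1, (Nat.succ_pred_eq_of_pos (Nat.pos_of_ne_zero hKpos)).symm⟩
  have hk1 : ¬ t < u k := by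
    rw [← hK] at *
    exact Nat.find_min hlim (by omega)
  push_neg at hk1
  have hKk : t < u (k+1) := by rw [hkK] at hKspec; exact hKspec
  have hstep := myStep hf hf2 hab (humem k) ht hk1 (lt_trans hKk (huhalf k))
  intro z hz
  exact (main k (myBallSubset hk1 hz)).trans (hstep hz)

theorem abs_monotone_extends_analytically (a b : ℝ) (hab : a < b)
    (f : ℝ → ℝ) (hf : AbsolutelyMonotoneOn' f (Set.Ioo a b)) :
    ∃ F : ℂ → ℂ, AnalyticOnNhd ℂ F (Metric.ball (a : ℂ) (b - a)) ∧
      ∀ x ∈ Set.Ioo a b, F (x : ℂ) = (f x : ℂ) := by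
  obtain ⟨hf1, hf2⟩ := hf
  classical
  have hba : 0 < b - a := by linarith
  obtain ⟨e, he⟩ : ∃ e : ℕ → ℝ, e = fun n => a + (b - a) * (1/2)^(n+1) := ⟨_, rfl⟩
  have hpowpos : ∀ k : ℕ, (0:ℝ) < (1/2)^k := fun k => pow_pos (by norm_num) k
  have hemem : ∀ n, e n ∈ Ioo a b := by
    intro n
    constructor
    · simp only [he]; nlinarith [hpowpos (n+1)]
    · simp only [he]
      have h1 : (1/2:ℝ)^(n+1) < 1 := pow_lt_one₀ (by norm_num) (by norm_num) (by omega)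
      nlinarith
  have hmono : ∀ m n : ℕ, n ≤ m → e m ≤ e n := by
    intro m n hnm
    simp only [he]
    have h1 := pow_le_pow_of_le_one (show (0:ℝ) ≤ 1/2 by norm_num)
      (by norm_num : (1/2:ℝ) ≤ 1) (Nat.add_le_add_right hnm 1)
    nlinarith
  have hdistR : ∀ s t : ℝ, s ≤ t → dist ((t:ℝ):ℂ) ((s:ℝ):ℂ) = t - s := by
    intro s t hst
    rw [Complex.isometry_ofReal.dist_eq, Real.dist_eq, abs_of_nonneg (by linarith)]
  obtain ⟨F, hF⟩ : ∃ F : ℂ → ℂ, F = fun z =>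
      if h : ∃ n, z ∈ Metric.ball ((e n : ℝ):ℂ) (b - e n) then myG f (e (Nat.find h)) z else 0 :=
    ⟨_, rfl⟩
  have hFeq : ∀ n, EqOn F (myG f (e n)) (Metric.ball ((e n:ℝ):ℂ) (b - e n)) := by
    intro n z hz
    have hex : ∃ m, z ∈ Metric.ball ((e m:ℝ):ℂ) (b - e m) := ⟨n, hz⟩
    have hFz : F z = myG f (e (Nat.find hex)) z := by
      rw [hF]; exact dif_pos hex
    rw [hFz]
    set m := Nat.find hex with hm
    have hzm : z ∈ Metric.ball ((e m:ℝ):ℂ) (b - e m) := Nat.find_spec hex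
    have h1 := myChain hf1 hf2 hab (hemem (max m n)) (hemem m)
      (hmono _ _ (le_max_left m n)) hzm
    have h2 := myChain hf1 hf2 hab (hemem (max m n)) (hemem n)
      (hmono _ _ (le_max_right m n)) hz
    exact h1.symm.trans h2
  refine ⟨F, ?_, ?_⟩
  · intro z hz
    have hz' : dist z ((a:ℝ):ℂ) < b - a := Metric.mem_ball.1 hz
    have hdist0 : 0 ≤ dist z ((a:ℝ):ℂ) := dist_nonneg
    obtain ⟨n, hn⟩ := exists_pow_lt_of_lt_one
      (show (0:ℝ) < (b - a - dist z ((a:ℝ):ℂ)) / (b - a) from div_pos (by linarith) hba)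
      (by norm_num : (1/2:ℝ) < 1)
    have hn' : (b - a) * (1/2:ℝ)^n < b - a - dist z ((a:ℝ):ℂ) := by
      have := (lt_div_iff₀ hba).1 hn
      linarith
    have hen : 2 * (e n - a) ≤ (b - a) * (1/2)^n := by
      simp only [he, pow_succ]
      nlinarith [hpowpos n]
    have hzn : z ∈ Metric.ball ((e n:ℝ):ℂ) (b - e n) := by
      rw [Metric.mem_ball]
      have htri := dist_triangle z ((a:ℝ):ℂ) ((e n:ℝ):ℂ)
      have hd : dist ((a:ℝ):ℂ) ((e n:ℝ):ℂ) = e n - a := by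
        rw [_root_.dist_comm]; exact hdistR a (e n) (le_of_lt (hemem n).1)
      rw [hd] at htri
      have := hemem n
      calc dist z ((e n:ℝ):ℂ) ≤ dist z ((a:ℝ):ℂ) + (e n - a) := htri
        _ < b - e n := by linarith
    have hanal := (myGAnalytic hf1 hf2 (hemem n) hab) z hzn
    apply hanal.congr
    exact (Filter.eventuallyEq_of_mem (Metric.isOpen_ball.mem_nhds hzn) (hFeq n)).symm
  · intro x hx
    obtain ⟨n, hn⟩ := exists_pow_lt_of_lt_one
      (show (0:ℝ) < (x - a) / (b - a) from div_pos (by linarith [hx.1]) hba)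
      (by norm_num : (1/2:ℝ) < 1)
    have hn' : (b - a) * (1/2:ℝ)^n < x - a := by
      have := (lt_div_iff₀ hba).1 hn
      linarith
    have henx : e n ≤ x := by
      simp only [he, pow_succ]
      nlinarith [hpowpos n]
    have hxball : (x:ℂ) ∈ Metric.ball ((e n:ℝ):ℂ) (b - e n) := by
      rw [Metric.mem_ball, hdistR (e n) x henx]
      linarith [hx.2]
    have h2 := myChain hf1 hf2 hab (hemem n) hx henx
    have hxself : (x:ℂ) ∈ Metric.ball ((x:ℝ):ℂ) (b - x) :=
      Metric.mem_ball_self (by linarith [hx.2])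
    rw [hFeq n hxball, h2 hxself]
    exact myGVal hf1 hf2 hx le_rfl (by linarith [hx.2])
end

section
/- Let a ≤ 0 < b and let φ : ℝ → ℝ have derivatives of all orders on [a, b) with φ(0) = 0. Define f(x) = φ(x)/x for x ∈ [a, b) \ {0} and f(0) = φ'(0). Then for every integer n ≥ 0, the n-th derivative of f on [a, b) satisfies f^(n)(x) = x^{-(n+1)} · ∑_{k=0}^{n} C(n,k) (-1)^k k! x^{n-k} φ^{(n-k)}(x) for x ∈ [a, b) with x ≠ 0, f^(n)(0) = φ^{(n+1)}(0)/(n+1), and f^(n) is continuous on [a, b). -/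
open Set Real

open Set Real MeasureTheory Filter Topology intervalIntegral

noncomputable def DD (φ : ℝ → ℝ) (a b : ℝ) : ℕ → ℝ → ℝ :=
  fun m => iteratedDerivWithin m φ (Set.Ico a b)

noncomputable def FF (φ : ℝ → ℝ) (a b : ℝ) : ℕ → ℝ → ℝ :=
  fun m x => ∫ t in (0:ℝ)..1, t ^ m * DD φ a b (m+1) (t * x)

section Aux
variable {a b : ℝ} {φ : ℝ → ℝ}

lemma memS (ha : a ≤ 0) (hb : 0 < b) {x t : ℝ} (hx : x ∈ Set.Ico a b)
    (ht0 : 0 ≤ t) (ht1 : t ≤ 1) : t * x ∈ Set.Ico a b := by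
  obtain ⟨hx1, hx2⟩ := hx
  constructor
  · rcases le_or_gt 0 x with h | h
    · nlinarith
    · nlinarith
  · rcases le_or_gt 0 x with h | h
    · nlinarith
    · nlinarith

lemma memS_strict (ha : a ≤ 0) (hb : 0 < b) {x t : ℝ} (hx1 : a < x) (hx2 : x < b)
    (ht0 : 0 < t) (ht1 : t ≤ 1) : a < t * x ∧ t * x < b := by
  constructor
  · nlinarith [mul_pos ht0 (sub_pos.mpr hx1), mul_nonneg (neg_nonneg.mpr ha) (sub_nonneg.mpr ht1)]
  · nlinarith [mul_pos ht0 (sub_pos.mpr hx2), mul_nonneg hb.le (sub_nonneg.mpr ht1)]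

lemma hDcont (hφ : ContDiffOn ℝ (⊤ : ℕ∞) φ (Set.Ico a b)) (m : ℕ) :
    ContinuousOn (DD φ a b m) (Set.Ico a b) :=
  hφ.continuousOn_iteratedDerivWithin (by exact_mod_cast le_top) (uniqueDiffOn_Ico a b)

lemma hDderiv (hφ : ContDiffOn ℝ (⊤ : ℕ∞) φ (Set.Ico a b)) (m : ℕ) {x : ℝ}
    (hx : x ∈ Set.Ico a b) :
    HasDerivWithinAt (DD φ a b m) (DD φ a b (m+1) x) (Set.Ico a b) x := by
  have h1 : DifferentiableOn ℝ (DD φ a b m) (Set.Ico a b) :=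
    hφ.differentiableOn_iteratedDerivWithin (by exact_mod_cast (WithTop.coe_lt_top m))
      (uniqueDiffOn_Ico a b)
  have h2 := (h1 x hx).hasDerivWithinAt
  have h3 : DD φ a b (m+1) x = derivWithin (DD φ a b m) (Set.Ico a b) x :=
    congrFun iteratedDerivWithin_succ x
  rw [h3]
  exact h2

lemma hDderivAt (hφ : ContDiffOn ℝ (⊤ : ℕ∞) φ (Set.Ico a b)) (m : ℕ) {x : ℝ}
    (hx : x ∈ Set.Ioo a b) :
    HasDerivAt (DD φ a b m) (DD φ a b (m+1) x) x :=
  (hDderiv hφ m (Set.Ioo_subset_Ico_self hx)).hasDerivAt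
    (Filter.mem_of_superset (isOpen_Ioo.mem_nhds hx) Set.Ioo_subset_Ico_self)

lemma integrandCont (ha : a ≤ 0) (hb : 0 < b) (hφ : ContDiffOn ℝ (⊤ : ℕ∞) φ (Set.Ico a b))
    (m j : ℕ) {x : ℝ} (hx : x ∈ Set.Ico a b) :
    ContinuousOn (fun t => t ^ m * DD φ a b j (t * x)) (Set.Icc (0:ℝ) 1) := by
  apply ContinuousOn.mul (continuous_pow m).continuousOn
  apply ContinuousOn.comp (hDcont hφ j) ((continuous_id.mul continuous_const).continuousOn)
  intro t ht
  exact memS ha hb hx ht.1 ht.2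

lemma integrandIntegrable (ha : a ≤ 0) (hb : 0 < b)
    (hφ : ContDiffOn ℝ (⊤ : ℕ∞) φ (Set.Ico a b)) (m j : ℕ) {x : ℝ} (hx : x ∈ Set.Ico a b) :
    IntervalIntegrable (fun t => t ^ m * DD φ a b j (t * x)) MeasureTheory.volume 0 1 :=
  (integrandCont ha hb hφ m j hx).intervalIntegrable_of_Icc (by norm_num)

lemma integrandMeas (ha : a ≤ 0) (hb : 0 < b)
    (hφ : ContDiffOn ℝ (⊤ : ℕ∞) φ (Set.Ico a b)) (m j : ℕ) {x : ℝ} (hx : x ∈ Set.Ico a b) :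
    MeasureTheory.AEStronglyMeasurable (fun t => t ^ m * DD φ a b j (t * x))
      (MeasureTheory.volume.restrict (Set.uIoc (0:ℝ) 1)) :=
  (intervalIntegrable_iff.mp (integrandIntegrable ha hb hφ m j hx)).aestronglyMeasurable

end Aux

section FFd
variable {a b : ℝ} {φ : ℝ → ℝ}

lemma FFderivAt (ha : a ≤ 0) (hb : 0 < b) (hφ : ContDiffOn ℝ (⊤ : ℕ∞) φ (Set.Ico a b))
    (m : ℕ) {x : ℝ} (hx : x ∈ Set.Ioo a b) :
    HasDerivAt (FF φ a b m) (FF φ a b (m+1) x) x := by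
  have h1 : min (x - a) (b - x) ≤ x - a := min_le_left _ _
  have h2 : min (x - a) (b - x) ≤ b - x := min_le_right _ _
  set ε : ℝ := min (x - a) (b - x) / 2 with hεdef
  have hε0 : 0 < ε := by
    have := hx.1; have := hx.2
    apply div_pos _ (by norm_num)
    exact lt_min (by linarith) (by linarith)
  have hball : ∀ y ∈ Metric.ball x ε, y ∈ Set.Ioo a b := by
    intro y hy
    rw [Metric.mem_ball, Real.dist_eq, abs_lt] at hy
    constructor <;> nlinarith [hy.1, hy.2]
  set c1 : ℝ := min (x - ε) 0 with hc1def
  set c2 : ℝ := max (x + ε) 0 with hc2def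
  have hc1a : a ≤ c1 := le_min (by nlinarith [hx.1]) ha
  have hc2b : c2 < b := max_lt (by nlinarith [hx.2]) hb
  have hc12 : c1 ≤ c2 := le_trans (min_le_right _ _) (le_max_right _ _)
  have hKS : Set.Icc c1 c2 ⊆ Set.Ico a b := fun z hz => ⟨le_trans hc1a hz.1, lt_of_le_of_lt hz.2 hc2b⟩
  obtain ⟨C, hC⟩ := isCompact_Icc.exists_bound_of_continuousOn ((hDcont hφ (m+2)).mono hKS)
  have hC0 : 0 ≤ C := le_trans (norm_nonneg _) (hC c1 ⟨le_refl _, hc12⟩)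
  show HasDerivAt (fun y => ∫ t in (0:ℝ)..1, t ^ m * DD φ a b (m+1) (t * y))
    (∫ t in (0:ℝ)..1, t ^ (m+1) * DD φ a b (m+2) (t * x)) x
  refine (intervalIntegral.hasDerivAt_integral_of_dominated_loc_of_deriv_le
    (F' := fun y t => t ^ (m+1) * DD φ a b (m+2) (t * y))
    (bound := fun _ => C) (Metric.ball_mem_nhds x hε0) ?_ ?_ ?_ ?_ ?_ ?_).2
  · filter_upwards [isOpen_Ioo.eventually_mem hx] with y hy
    exact integrandMeas ha hb hφ m (m+1) (Set.Ioo_subset_Ico_self hy)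
  · exact integrandIntegrable ha hb hφ m (m+1) (Set.Ioo_subset_Ico_self hx)
  · exact integrandMeas ha hb hφ (m+1) (m+2) (Set.Ioo_subset_Ico_self hx)
  · apply Filter.Eventually.of_forall
    intro t ht y hy
    rw [Set.uIoc_of_le (by norm_num : (0:ℝ) ≤ 1), Set.mem_Ioc] at ht
    rw [Metric.mem_ball, Real.dist_eq, abs_lt] at hy
    have hz : t * y ∈ Set.Icc c1 c2 := by
      constructor
      · rcases le_or_gt 0 y with h | h
        · exact le_trans (min_le_right _ _) (mul_nonneg ht.1.le h)
        · refine le_trans (min_le_left _ _) ?_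
          nlinarith [ht.1, ht.2, hy.1]
      · rcases le_or_gt 0 y with h | h
        · refine le_trans ?_ (le_max_left _ _)
          nlinarith [ht.1, ht.2, hy.2]
        · exact le_trans (by nlinarith [ht.1, ht.2] : t * y ≤ 0) (le_max_right _ _)
    have habs : |t ^ (m+1)| ≤ 1 := by
      rw [abs_pow]
      apply pow_le_one₀ (abs_nonneg t)
      rw [abs_le]; constructor <;> linarith [ht.1, ht.2]
    calc ‖t ^ (m+1) * DD φ a b (m+2) (t * y)‖
        = |t ^ (m+1)| * ‖DD φ a b (m+2) (t * y)‖ := by rw [norm_mul]; rfl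
      _ ≤ 1 * C := mul_le_mul habs (hC _ hz) (norm_nonneg _) (by norm_num)
      _ = C := one_mul C
  · exact intervalIntegrable_const
  · apply Filter.Eventually.of_forall
    intro t ht y hy
    rw [Set.uIoc_of_le (by norm_num : (0:ℝ) ≤ 1), Set.mem_Ioc] at ht
    have hy' : y ∈ Set.Ioo a b := hball y hy
    have hz : t * y ∈ Set.Ioo a b := by
      obtain ⟨hh1, hh2⟩ := memS_strict ha hb hy'.1 hy'.2 ht.1 ht.2
      exact ⟨hh1, hh2⟩
    have hD := hDderivAt hφ (m+1) hz
    have hmul : HasDerivAt (fun y : ℝ => t * y) t y := by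
      simpa using (hasDerivAt_id y).const_mul t
    have hcomp := (hD.comp y hmul).const_mul (t ^ m)
    exact hcomp.congr_deriv (by ring)

end FFd

section FFc
variable {a b : ℝ} {φ : ℝ → ℝ}

lemma FFcont (ha : a ≤ 0) (hb : 0 < b) (hφ : ContDiffOn ℝ (⊤ : ℕ∞) φ (Set.Ico a b))
    (m : ℕ) : ContinuousOn (FF φ a b m) (Set.Ico a b) := by
  intro x₀ hx₀
  set c : ℝ := max ((x₀ + b)/2) 0 with hcdef
  have hcb : c < b := max_lt (by linarith [hx₀.2]) hb
  have hc0 : 0 ≤ c := le_max_right _ _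
  have hx₀c : x₀ < c := lt_of_lt_of_le (by linarith [hx₀.2]) (le_max_left _ _)
  have hKS : Set.Icc a c ⊆ Set.Ico a b := Set.Icc_subset_Ico_right hcb
  obtain ⟨C, hC⟩ := isCompact_Icc.exists_bound_of_continuousOn ((hDcont hφ (m+1)).mono hKS)
  show ContinuousWithinAt (fun y => ∫ t in (0:ℝ)..1, t ^ m * DD φ a b (m+1) (t * y))
    (Set.Ico a b) x₀
  apply intervalIntegral.continuousWithinAt_of_dominated_interval (bound := fun _ => C)
  · filter_upwards [self_mem_nhdsWithin] with y hy
    exact integrandMeas ha hb hφ m (m+1) hy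
  · have h1 : ∀ᶠ y in 𝓝[Set.Ico a b] x₀, y < c :=
      eventually_nhdsWithin_of_eventually_nhds
        (isOpen_Iio.eventually_mem (show x₀ ∈ Set.Iio c from hx₀c))
    filter_upwards [self_mem_nhdsWithin, h1] with y hyS hyc
    apply Filter.Eventually.of_forall
    intro t ht
    rw [Set.uIoc_of_le (by norm_num : (0:ℝ) ≤ 1), Set.mem_Ioc] at ht
    have hz : t * y ∈ Set.Icc a c := by
      constructor
      · exact (memS ha hb hyS ht.1.le ht.2).1
      · rcases le_or_gt 0 y with h | h
        · nlinarith [ht.1, ht.2]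
        · nlinarith [ht.1, ht.2]
    have habs : |t ^ m| ≤ 1 := by
      rw [abs_pow]
      apply pow_le_one₀ (abs_nonneg t)
      rw [abs_le]; constructor <;> linarith [ht.1, ht.2]
    calc ‖t ^ m * DD φ a b (m+1) (t * y)‖
        = |t ^ m| * ‖DD φ a b (m+1) (t * y)‖ := by rw [norm_mul]; rfl
      _ ≤ 1 * C := mul_le_mul habs (hC _ hz) (norm_nonneg _) (by norm_num)
      _ = C := one_mul C
  · exact intervalIntegrable_const
  · apply Filter.Eventually.of_forall
    intro t ht
    rw [Set.uIoc_of_le (by norm_num : (0:ℝ) ≤ 1), Set.mem_Ioc] at ht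
    have hcw : ContinuousWithinAt (fun y => DD φ a b (m+1) (t * y)) (Set.Ico a b) x₀ :=
      (hDcont hφ (m+1) _ (memS ha hb hx₀ ht.1.le ht.2)).comp
        ((continuous_const.mul continuous_id).continuousWithinAt)
        (fun y hy => memS ha hb hy ht.1.le ht.2)
    exact continuousWithinAt_const.mul hcw

lemma FFderivWithin (ha : a ≤ 0) (hb : 0 < b) (hφ : ContDiffOn ℝ (⊤ : ℕ∞) φ (Set.Ico a b))
    (m : ℕ) {x : ℝ} (hx : x ∈ Set.Ico a b) :
    HasDerivWithinAt (FF φ a b m) (FF φ a b (m+1) x) (Set.Ico a b) x := by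
  have hab : a < b := lt_of_le_of_lt ha hb
  rcases eq_or_lt_of_le hx.1 with rfl | hax
  · have hIoo : Set.Ioo a b ∈ 𝓝[>] a := Ioo_mem_nhdsGT_of_mem ⟨le_refl a, hab⟩
    have f_diff : DifferentiableOn ℝ (FF φ a b m) (Set.Ioo a b) := fun y hy =>
      (FFderivAt ha hb hφ m hy).differentiableAt.differentiableWithinAt
    have f_lim : ContinuousWithinAt (FF φ a b m) (Set.Ioo a b) a :=
      (FFcont ha hb hφ m a hx).mono Set.Ioo_subset_Ico_self
    have h1 : Filter.Tendsto (FF φ a b (m+1)) (𝓝[>] a) (𝓝 (FF φ a b (m+1) a)) := by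
      rw [← nhdsWithin_Ioo_eq_nhdsGT hab]
      exact ((FFcont ha hb hφ (m+1) a hx).mono Set.Ioo_subset_Ico_self)
    have f_lim' : Filter.Tendsto (fun y => deriv (FF φ a b m) y) (𝓝[>] a)
        (𝓝 (FF φ a b (m+1) a)) := by
      refine Filter.Tendsto.congr' ?_ h1
      filter_upwards [hIoo] with y hy
      exact ((FFderivAt ha hb hφ m hy).deriv).symm
    exact (hasDerivWithinAt_Ici_of_tendsto_deriv f_diff f_lim hIoo f_lim').mono
      Set.Ico_subset_Ici_self
  · exact (FFderivAt ha hb hφ m ⟨hax, hx.2⟩).hasDerivWithinAt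

end FFc

lemma sumKey (n : ℕ) (g : ℕ → ℝ) :
    ∑ k ∈ Finset.range (n+1),
      ((n.choose k : ℝ) * (-1)^(k+1) * (Nat.factorial (k+1)) * g (k+1)
        + (n.choose k : ℝ) * (-1)^k * (Nat.factorial k) * g k)
    = ∑ k ∈ Finset.range (n+2),
        (((n+1).choose k : ℝ)) * (-1)^k * (Nat.factorial k) * g k := by
  rw [Finset.sum_add_distrib]
  rw [Finset.sum_range_succ' (fun k => (((n+1).choose k : ℝ)) * (-1)^k * (Nat.factorial k) * g k) (n+1)]
  rw [Finset.sum_range_succ' (fun k => (n.choose k : ℝ) * (-1)^k * (Nat.factorial k) * g k) n]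
  have hlast : ∑ k ∈ Finset.range (n+1), ((n.choose (k+1) : ℝ)) * (-1)^(k+1) * (Nat.factorial (k+1)) * g (k+1)
      = ∑ k ∈ Finset.range n, ((n.choose (k+1) : ℝ)) * (-1)^(k+1) * (Nat.factorial (k+1)) * g (k+1) := by
    rw [Finset.sum_range_succ, Nat.choose_succ_self]
    simp
  have pascal : ∀ k, (((n+1).choose (k+1) : ℝ)) = (n.choose k : ℝ) + (n.choose (k+1) : ℝ) := by
    intro k; rw [Nat.choose_succ_succ]; push_cast; ring
  simp only [pascal]
  rw [← hlast]
  simp only [Nat.choose_zero_right, Nat.cast_one, pow_zero, Nat.factorial_zero]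
  ring_nf
  rw [add_comm _ (g 0), ← Finset.sum_add_distrib]
  congr 1

section Main
variable {a b : ℝ} {φ : ℝ → ℝ}

lemma hD0eq : DD φ a b 0 = φ := iteratedDerivWithin_zero

lemma xFF0 (ha : a ≤ 0) (hb : 0 < b) (hφ : ContDiffOn ℝ (⊤ : ℕ∞) φ (Set.Ico a b))
    (hφ0 : φ 0 = 0) {x : ℝ} (hx : x ∈ Set.Ico a b) :
    x * FF φ a b 0 x = φ x := by
  by_cases hx0 : x = 0
  · subst hx0
    simp [hφ0]
  · have hcont : ContinuousOn (fun t => φ (t * x)) (Set.Icc (0:ℝ) 1) := by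
      have := (hDcont hφ 0).comp ((continuous_id.mul continuous_const).continuousOn)
        (fun t (ht : t ∈ Set.Icc (0:ℝ) 1) => memS ha hb hx ht.1 ht.2)
      simpa [hD0eq, Function.comp_def, Pi.mul_apply] using this
    have hderiv : ∀ t ∈ Set.Ioo (0:ℝ) 1,
        HasDerivWithinAt (fun t => φ (t * x)) (x * (t ^ 0 * DD φ a b 1 (t * x))) (Set.Ioi t) t := by
      intro t ht
      have hz : t * x ∈ Set.Ioo a b := by
        rcases lt_or_gt_of_ne hx0 with h | h
        · constructor <;> nlinarith [hx.1, hx.2, ht.1, ht.2]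
        · constructor <;> nlinarith [hx.1, hx.2, ht.1, ht.2]
      have hφd : HasDerivAt φ (DD φ a b 1 (t * x)) (t * x) := by
        have := hDderivAt hφ 0 hz
        rwa [hD0eq] at this
      have hmul : HasDerivAt (fun t : ℝ => t * x) x t := by
        simpa using (hasDerivAt_id t).mul_const x
      have h := (hφd.comp t hmul).hasDerivWithinAt (s := Set.Ioi t)
      exact h.congr_deriv (by ring)
    have hint : IntervalIntegrable (fun t => x * (t ^ 0 * DD φ a b 1 (t * x)))
        MeasureTheory.volume 0 1 := (integrandIntegrable ha hb hφ 0 1 hx).const_mul x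
    have key := intervalIntegral.integral_eq_sub_of_hasDeriv_right_of_le
      (by norm_num : (0:ℝ) ≤ 1) hcont hderiv hint
    simp only [one_mul, zero_mul, hφ0, sub_zero] at key
    show x * ∫ t in (0:ℝ)..1, t ^ 0 * DD φ a b 1 (t * x) = φ x
    rw [← intervalIntegral.integral_const_mul]
    exact key

lemma FFzero (m : ℕ) (hφ : ContDiffOn ℝ (⊤ : ℕ∞) φ (Set.Ico a b)) :
    FF φ a b m 0 = DD φ a b (m+1) 0 / ((m : ℝ) + 1) := by
  show (∫ t in (0:ℝ)..1, t ^ m * DD φ a b (m+1) (t * 0)) = _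
  simp only [mul_zero]
  rw [intervalIntegral.integral_mul_const, integral_pow]
  norm_num
  ring

lemma IDW_eq_FF (ha : a ≤ 0) (hb : 0 < b) (hφ : ContDiffOn ℝ (⊤ : ℕ∞) φ (Set.Ico a b))
    (hφ0 : φ 0 = 0) {f : ℝ → ℝ}
    (hf : ∀ x ∈ Set.Ico a b, x ≠ 0 → f x = φ x / x)
    (hf0 : f 0 = derivWithin φ (Set.Ico a b) 0) (m : ℕ) :
    ∀ x ∈ Set.Ico a b, iteratedDerivWithin m f (Set.Ico a b) x = FF φ a b m x := by
  induction m with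
  | zero =>
    intro x hx
    rw [iteratedDerivWithin_zero]
    by_cases hx0 : x = 0
    · subst hx0
      have h0 : (0:ℝ) ∈ Set.Ico a b := ⟨ha, hb⟩
      rw [hf0, FFzero 0 hφ]
      have h1 : DD φ a b 1 0 = derivWithin φ (Set.Ico a b) 0 :=
        congrFun iteratedDerivWithin_one 0
      rw [h1]
      norm_num
    · rw [hf x hx hx0]
      have h1 := xFF0 ha hb hφ hφ0 hx
      field_simp
      linarith [h1]
  | succ m ih =>
    intro x hx
    rw [iteratedDerivWithin_succ]
    rw [derivWithin_congr (fun y hy => ih y hy) (ih x hx)]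
    exact (FFderivWithin ha hb hφ m hx).derivWithin (uniqueDiffOn_Ico a b x hx)

lemma pow_mul_aux (x : ℝ) (j : ℕ) : (j : ℝ) * (x * x ^ (j-1)) = (j : ℝ) * x ^ j := by
  cases j with
  | zero => simp
  | succ j => rw [Nat.add_sub_cancel]; ring

lemma xpowFF (ha : a ≤ 0) (hb : 0 < b) (hφ : ContDiffOn ℝ (⊤ : ℕ∞) φ (Set.Ico a b))
    (hφ0 : φ 0 = 0) : ∀ m : ℕ, ∀ x ∈ Set.Ico a b,
    x ^ (m+1) * FF φ a b m x =
      ∑ k ∈ Finset.range (m+1),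
        (m.choose k : ℝ) * (-1)^k * (Nat.factorial k : ℝ) * x^(m-k) * DD φ a b (m-k) x := by
  intro m
  induction m with
  | zero =>
    intro x hx
    rw [Finset.sum_range_one]
    simp only [Nat.choose_self, Nat.cast_one, pow_zero, Nat.factorial_zero, Nat.sub_zero,
      hD0eq, one_mul, pow_one]
    simpa using xFF0 ha hb hφ hφ0 hx
  | succ m ih =>
    intro x hx
    have hL : HasDerivWithinAt (fun y => y^(m+1) * FF φ a b m y)
        (((m:ℝ)+1) * x^m * FF φ a b m x + x^(m+1) * FF φ a b (m+1) x) (Set.Ico a b) x := by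
      have h := (hasDerivWithinAt_pow (m+1) x (s := Set.Ico a b)).mul (FFderivWithin ha hb hφ m hx)
      have e : ((m+1:ℕ):ℝ) * x ^ (m+1-1) = ((m:ℝ)+1) * x^m := by
        rw [Nat.add_sub_cancel]; push_cast; ring
      rw [e] at h
      exact h
    have hR : HasDerivWithinAt
        (fun y => ∑ k ∈ Finset.range (m+1),
          (m.choose k : ℝ) * (-1)^k * (Nat.factorial k : ℝ) * y^(m-k) * DD φ a b (m-k) y)
        (∑ k ∈ Finset.range (m+1),
          (m.choose k : ℝ) * (-1)^k * (Nat.factorial k : ℝ) *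
            (((m-k:ℕ):ℝ) * x^(m-k-1) * DD φ a b (m-k) x + x^(m-k) * DD φ a b (m-k+1) x))
        (Set.Ico a b) x := by
      have h : HasDerivWithinAt
          (fun y => ∑ k ∈ Finset.range (m+1),
            (m.choose k : ℝ) * (-1)^k * (Nat.factorial k : ℝ) * (y^(m-k) * DD φ a b (m-k) y))
          (∑ k ∈ Finset.range (m+1),
            (m.choose k : ℝ) * (-1)^k * (Nat.factorial k : ℝ) *
              (((m-k:ℕ):ℝ) * x^(m-k-1) * DD φ a b (m-k) x + x^(m-k) * DD φ a b (m-k+1) x)) (Set.Ico a b) x := by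
        apply HasDerivWithinAt.fun_sum
        intro k _
        exact ((hasDerivWithinAt_pow (m-k) x (s := Set.Ico a b)).mul
          (hDderiv hφ (m-k) hx)).const_mul _
      have e : (fun y => ∑ k ∈ Finset.range (m+1),
            (m.choose k : ℝ) * (-1)^k * (Nat.factorial k : ℝ) * (y^(m-k) * DD φ a b (m-k) y))
          = (fun y => ∑ k ∈ Finset.range (m+1),
            (m.choose k : ℝ) * (-1)^k * (Nat.factorial k : ℝ) * y^(m-k) * DD φ a b (m-k) y) := by
        funext y
        apply Finset.sum_congr rfl
        intro k _
        ring
      rwa [e] at h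
    have heq : ((m:ℝ)+1) * x^m * FF φ a b m x + x^(m+1) * FF φ a b (m+1) x
        = ∑ k ∈ Finset.range (m+1),
          (m.choose k : ℝ) * (-1)^k * (Nat.factorial k : ℝ) *
            (((m-k:ℕ):ℝ) * x^(m-k-1) * DD φ a b (m-k) x + x^(m-k) * DD φ a b (m-k+1) x) := by
      have e1 := hL.derivWithin (uniqueDiffOn_Ico a b x hx)
      have e2 := hR.derivWithin (uniqueDiffOn_Ico a b x hx)
      have e3 := derivWithin_congr (f₁ := fun y => y^(m+1) * FF φ a b m y)
        (f := fun y => ∑ k ∈ Finset.range (m+1),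
          (m.choose k : ℝ) * (-1)^k * (Nat.factorial k : ℝ) * y^(m-k) * DD φ a b (m-k) y)
        (fun y hy => ih y hy) (ih x hx)
      rw [← e1, e3, e2]
    have step1 : x^(m+1+1) * FF φ a b (m+1) x
        = x * (∑ k ∈ Finset.range (m+1),
          (m.choose k : ℝ) * (-1)^k * (Nat.factorial k : ℝ) *
            (((m-k:ℕ):ℝ) * x^(m-k-1) * DD φ a b (m-k) x + x^(m-k) * DD φ a b (m-k+1) x))
          - ((m:ℝ)+1) * (x^(m+1) * FF φ a b m x) := by
      linear_combination x * heq
    rw [step1, ih x hx, Finset.mul_sum, Finset.mul_sum, ← Finset.sum_sub_distrib]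
    have target_eq : (∑ k ∈ Finset.range (m+1+1),
          ((m+1).choose k : ℝ) * (-1)^k * (Nat.factorial k : ℝ) * x^(m+1-k) * DD φ a b (m+1-k) x)
        = ∑ k ∈ Finset.range (m+2),
          (((m+1).choose k : ℝ)) * (-1)^k * (Nat.factorial k : ℝ) * (x^(m+1-k) * DD φ a b (m+1-k) x) :=
      Finset.sum_congr rfl (fun k _ => by ring)
    rw [target_eq, ← sumKey m (fun k => x^(m+1-k) * DD φ a b (m+1-k) x)]
    apply Finset.sum_congr rfl
    intro k hk
    have hkm : k ≤ m := Nat.lt_succ_iff.mp (Finset.mem_range.mp hk)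
    obtain ⟨j, hj⟩ := Nat.le.dest hkm
    have hj1 : m - k = j := by omega
    have hj2 : m + 1 - (k+1) = j := by omega
    have hj3 : m + 1 - k = j + 1 := by omega
    simp only [hj1, hj2, hj3]
    have hmc : (m:ℝ) = (k:ℝ) + (j:ℝ) := by push_cast [← hj]; ring
    cases j with
    | zero =>
      simp only [Nat.cast_zero, pow_zero, Nat.zero_sub, zero_mul, Nat.cast_ofNat]
      push_cast [Nat.factorial_succ] at hmc ⊢
      rw [hmc]
      ring
    | succ j =>
      rw [Nat.add_sub_cancel]
      push_cast [Nat.factorial_succ] at hmc ⊢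
      rw [hmc]
      ring

end Main

theorem phi_div_x_iterated_deriv (a b : ℝ) (ha : a ≤ 0) (hb : 0 < b)
    (φ : ℝ → ℝ) (hφ : ContDiffOn ℝ (⊤ : ℕ∞) φ (Set.Ico a b)) (hφ0 : φ 0 = 0)
    (f : ℝ → ℝ)
    (hf : ∀ x ∈ Set.Ico a b, x ≠ 0 → f x = φ x / x)
    (hf0 : f 0 = derivWithin φ (Set.Ico a b) 0) :
    ∀ n : ℕ,
      (∀ x ∈ Set.Ico a b, x ≠ 0 →
        iteratedDerivWithin n f (Set.Ico a b) x =
          (1 / x ^ (n + 1)) *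
            ∑ k ∈ Finset.range (n + 1),
              (n.choose k : ℝ) * (-1) ^ k * (Nat.factorial k : ℝ) * x ^ (n - k) *
                iteratedDerivWithin (n - k) φ (Set.Ico a b) x) ∧
      iteratedDerivWithin n f (Set.Ico a b) 0 =
        iteratedDerivWithin (n + 1) φ (Set.Ico a b) 0 / (n + 1) ∧
      ContinuousOn (iteratedDerivWithin n f (Set.Ico a b)) (Set.Ico a b) := by
  intro n
  have h0 : (0:ℝ) ∈ Set.Ico a b := ⟨ha, hb⟩
  have hIDW := IDW_eq_FF ha hb hφ hφ0 hf hf0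
  refine ⟨?_, ?_, ?_⟩
  · intro x hx hx0
    rw [hIDW n x hx]
    have h1 := xpowFF ha hb hφ hφ0 n x hx
    have hxp : x ^ (n+1) ≠ 0 := pow_ne_zero _ hx0
    have h2 : (∑ k ∈ Finset.range (n + 1),
        (n.choose k : ℝ) * (-1) ^ k * (Nat.factorial k : ℝ) * x ^ (n - k) *
          iteratedDerivWithin (n - k) φ (Set.Ico a b) x)
        = x ^ (n+1) * FF φ a b n x := by
      rw [h1]; rfl
    rw [h2]
    field_simp
  · rw [hIDW n 0 h0, FFzero n hφ]
    show DD φ a b (n+1) 0 / ((n:ℝ)+1) = DD φ a b (n+1) 0 / ((n:ℝ)+1)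
    rfl
  · exact (FFcont ha hb hφ n).congr (fun x hx => hIDW n x hx)
end

section
/- Let a ≤ 0 < b and let φ : ℝ → ℝ have derivatives of all orders on [a, b). Then for every integer n ≥ 0 and every x ∈ [a, b), the derivative of the function x ↦ ∑_{k=0}^{n} C(n,k) (-1)^k k! x^{n-k} φ^{(n-k)}(x) at x equals x^n φ^{(n+1)}(x). -/
open Set Real

lemma choose_coeff_id (n k : ℕ) (hk : k < n) :
    n.choose k * Nat.factorial k * (n - k) = n.choose (k+1) * Nat.factorial (k+1) := by
  have h1 : n - k = (n - (k+1)) + 1 := by omega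
  apply Nat.eq_of_mul_eq_mul_right (Nat.factorial_pos (n - (k+1)))
  have e1 : n.choose k * Nat.factorial k * (n - k) * Nat.factorial (n - (k+1))
      = n.choose k * Nat.factorial k * Nat.factorial (n - k) := by
    rw [h1, Nat.factorial_succ]; ring
  rw [e1, Nat.choose_mul_factorial_mul_factorial hk.le,
    Nat.choose_mul_factorial_mul_factorial (by omega : k + 1 ≤ n)]

theorem deriv_of_sum_formula (a b : ℝ) (ha : a ≤ 0) (hb : 0 < b)
    (φ : ℝ → ℝ) (hφ : ContDiffOn ℝ (⊤ : ℕ∞) φ (Set.Ico a b)) :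
    ∀ n : ℕ, ∀ x ∈ Set.Ico a b,
      derivWithin
        (fun y => ∑ k ∈ Finset.range (n + 1),
          (n.choose k : ℝ) * (-1) ^ k * (Nat.factorial k : ℝ) * y ^ (n - k) *
            iteratedDerivWithin (n - k) φ (Set.Ico a b) y)
        (Set.Ico a b) x =
      x ^ n * iteratedDerivWithin (n + 1) φ (Set.Ico a b) x := by
  intro n x hx
  set s := Set.Ico a b with hs
  have hsu : UniqueDiffOn ℝ s := uniqueDiffOn_Ico a b
  set F : ℕ → ℝ → ℝ := fun m => iteratedDerivWithin m φ s with hF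
  have hFd : ∀ m : ℕ, HasDerivWithinAt (F m) (F (m+1) x) s x := by
    intro m
    have hdiff : DifferentiableWithinAt ℝ (F m) s x :=
      hφ.differentiableOn_iteratedDerivWithin (by exact_mod_cast WithTop.coe_lt_top _) hsu x hx
    have := hdiff.hasDerivWithinAt
    rwa [show derivWithin (F m) s x = F (m+1) x from
      (congrFun iteratedDerivWithin_succ x).symm] at this
  -- derivative of each summand
  have key : ∀ k, HasDerivWithinAt
      (fun y => (n.choose k : ℝ) * (-1) ^ k * (Nat.factorial k : ℝ) * y ^ (n - k) * F (n - k) y)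
      ((n.choose k : ℝ) * (-1) ^ k * (Nat.factorial k : ℝ) *
        (((n - k : ℕ) : ℝ) * x ^ (n - k - 1) * F (n - k) x + x ^ (n - k) * F (n - k + 1) x))
      s x := by
    intro k
    have hp : HasDerivWithinAt (fun y : ℝ => y ^ (n - k)) (((n - k : ℕ) : ℝ) * x ^ (n - k - 1)) s x :=
      (hasDerivAt_pow (n - k) x).hasDerivWithinAt
    have := (hp.fun_mul (hFd (n - k))).const_mul ((n.choose k : ℝ) * (-1) ^ k * (Nat.factorial k : ℝ))
    convert this using 2 <;> [rfl; rfl; ring]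
  have hsum : HasDerivWithinAt
      (fun y => ∑ k ∈ Finset.range (n + 1),
        (n.choose k : ℝ) * (-1) ^ k * (Nat.factorial k : ℝ) * y ^ (n - k) * F (n - k) y)
      (∑ k ∈ Finset.range (n + 1),
        (n.choose k : ℝ) * (-1) ^ k * (Nat.factorial k : ℝ) *
          (((n - k : ℕ) : ℝ) * x ^ (n - k - 1) * F (n - k) x + x ^ (n - k) * F (n - k + 1) x))
      s x := HasDerivWithinAt.fun_sum fun k _ => key k
  rw [hsum.derivWithin (hsu x hx)]
  -- telescoping
  set A : ℕ → ℝ := fun k => (n.choose k : ℝ) * (-1) ^ k * (Nat.factorial k : ℝ) *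
    (((n - k : ℕ) : ℝ) * x ^ (n - k - 1) * F (n - k) x) with hA
  set B : ℕ → ℝ := fun k => (n.choose k : ℝ) * (-1) ^ k * (Nat.factorial k : ℝ) *
    (x ^ (n - k) * F (n - k + 1) x) with hB
  have hAB : ∀ k ∈ Finset.range n, A k + B (k+1) = 0 := by
    intro k hk
    have hkn : k < n := Finset.mem_range.mp hk
    have h1 : n - (k+1) = n - k - 1 := by omega
    have h2 : n - (k+1) + 1 = n - k := by omega
    have h3 : n - k - 1 + 1 = n - k := by omega
    have hc : (n.choose k : ℝ) * (Nat.factorial k : ℝ) * ((n - k : ℕ) : ℝ)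
        = (n.choose (k+1) : ℝ) * (Nat.factorial (k+1) : ℝ) := by
      exact_mod_cast choose_coeff_id n k hkn
    simp only [hA, hB, h1, h2, h3, pow_succ]
    linear_combination ((-1:ℝ)^k * x^(n-k-1) * F (n-k) x) * hc
  have hAn : A n = 0 := by simp [hA]
  calc ∑ k ∈ Finset.range (n + 1),
        (n.choose k : ℝ) * (-1) ^ k * (Nat.factorial k : ℝ) *
          (((n - k : ℕ) : ℝ) * x ^ (n - k - 1) * F (n - k) x + x ^ (n - k) * F (n - k + 1) x)
      = ∑ k ∈ Finset.range (n + 1), (A k + B k) := by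
        apply Finset.sum_congr rfl; intro k _; simp only [hA, hB]; ring
    _ = (∑ k ∈ Finset.range (n + 1), A k) + ∑ k ∈ Finset.range (n + 1), B k := by
        rw [Finset.sum_add_distrib]
    _ = (∑ k ∈ Finset.range n, A k) + ((∑ k ∈ Finset.range n, B (k+1)) + B 0) := by
        rw [Finset.sum_range_succ, hAn, add_zero, Finset.sum_range_succ']
    _ = (∑ k ∈ Finset.range n, (A k + B (k+1))) + B 0 := by
        rw [Finset.sum_add_distrib]; ring
    _ = B 0 := by rw [Finset.sum_congr rfl hAB]; simp
    _ = x ^ n * iteratedDerivWithin (n + 1) φ s x := by simp [hB, hF]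
end

section
/- Let 0 < b ≤ ∞ and let f : ℝ → ℝ be positive on [0, b) such that log∘f is a Bernstein function on [0, b), i.e. log(f(x)) ≥ 0 on [0, b) and the derivative (log∘f)' is completely monotone on [0, b). Let g : ℝ → ℝ be completely monotone on (0, b). Then the function x ↦ f(x)^{g(x)/x} is logarithmically completely monotone on (0, b). -/
open Set Real Filter Topology

lemma cm_mul_sign {s : Set ℝ} (hs : UniqueDiffOn ℝ s) (n : ℕ) :
    ∀ u v : ℝ → ℝ, CompletelyMonotoneOn u s → CompletelyMonotoneOn v s →
      ∀ x ∈ s, 0 ≤ (-1 : ℝ) ^ n * iteratedDerivWithin n (fun y => u y * v y) s x := by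
  induction n with
  | zero =>
    intro u v hu hv x hx
    have h1 := hu.2 0 x hx
    have h2 := hv.2 0 x hx
    simp only [pow_zero, one_mul, iteratedDerivWithin_zero] at h1 h2 ⊢
    exact mul_nonneg h1 h2
  | succ n IH =>
    intro u v hu hv x hx
    have hu' : ContDiffOn ℝ (⊤:ℕ∞) (derivWithin u s) s :=
      ((contDiffOn_infty_iff_derivWithin hs).mp hu.1).2
    have hv' : ContDiffOn ℝ (⊤:ℕ∞) (derivWithin v s) s :=
      ((contDiffOn_infty_iff_derivWithin hs).mp hv.1).2
    have hdu : DifferentiableOn ℝ u s := hu.1.differentiableOn (by simp)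
    have hdv : DifferentiableOn ℝ v s := hv.1.differentiableOn (by simp)
    have heq : Set.EqOn (derivWithin (fun y => u y * v y) s)
        (fun y => (-(fun z => -derivWithin u s z * v z) y)
          + (-(fun z => u z * -derivWithin v s z) y)) s := by
      intro y hy
      rw [derivWithin_fun_mul (hdu y hy) (hdv y hy)]
      ring
    have key : iteratedDerivWithin (n+1) (fun y => u y * v y) s x
        = iteratedDerivWithin n (fun y => (-(fun z => -derivWithin u s z * v z) y)
            + (-(fun z => u z * -derivWithin v s z) y)) s x := by
      rw [iteratedDerivWithin_succ']
      exact iteratedDerivWithin_congr heq hx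
    have hcuv : ContDiffOn ℝ (n:ℕ∞) (fun z => -derivWithin u s z * v z) s :=
      ((hu'.neg.mul hv.1).of_le (by exact_mod_cast le_top))
    have hcvu : ContDiffOn ℝ (n:ℕ∞) (fun z => u z * -derivWithin v s z) s :=
      ((hu.1.mul hv'.neg).of_le (by exact_mod_cast le_top))
    have hadd : iteratedDerivWithin n (fun y => (-(fun z => -derivWithin u s z * v z) y)
            + (-(fun z => u z * -derivWithin v s z) y)) s x
        = iteratedDerivWithin n (-(fun z => -derivWithin u s z * v z)) s x
            + iteratedDerivWithin n (-(fun z => u z * -derivWithin v s z)) s x :=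
      iteratedDerivWithin_add hx hs (by exact_mod_cast (hcuv.neg x hx)) (by exact_mod_cast (hcvu.neg x hx))
    have hnu : iteratedDerivWithin n (-(fun z => -derivWithin u s z * v z)) s x
        = - iteratedDerivWithin n (fun z => -derivWithin u s z * v z) s x :=
      iteratedDerivWithin_neg _
    have hnv : iteratedDerivWithin n (-(fun z => u z * -derivWithin v s z)) s x
        = - iteratedDerivWithin n (fun z => u z * -derivWithin v s z) s x :=
      iteratedDerivWithin_neg _
    have hmu : CompletelyMonotoneOn (fun z => -derivWithin u s z) s := by
      refine ⟨hu'.neg, fun m y hy => ?_⟩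
      have h3 : iteratedDerivWithin m (fun z => -derivWithin u s z) s y
          = - iteratedDerivWithin m (derivWithin u s) s y := iteratedDerivWithin_fun_neg _
      rw [h3, ← iteratedDerivWithin_succ']
      have h4 := hu.2 (m+1) y hy
      rw [pow_succ] at h4
      nlinarith [h4]
    have hmv : CompletelyMonotoneOn (fun z => -derivWithin v s z) s := by
      refine ⟨hv'.neg, fun m y hy => ?_⟩
      have h3 : iteratedDerivWithin m (fun z => -derivWithin v s z) s y
          = - iteratedDerivWithin m (derivWithin v s) s y := iteratedDerivWithin_fun_neg _
      rw [h3, ← iteratedDerivWithin_succ']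
      have h4 := hv.2 (m+1) y hy
      rw [pow_succ] at h4
      nlinarith [h4]
    have H1 := IH (fun z => -derivWithin u s z) v hmu hv x hx
    have H2 := IH u (fun z => -derivWithin v s z) hu hmv x hx
    rw [key, hadd, hnu, hnv, pow_succ]
    nlinarith [H1, H2]

lemma cm_mul_s10 {s : Set ℝ} (hs : UniqueDiffOn ℝ s) {u v : ℝ → ℝ}
    (hu : CompletelyMonotoneOn u s) (hv : CompletelyMonotoneOn v s) :
    CompletelyMonotoneOn (fun y => u y * v y) s :=
  ⟨hu.1.mul hv.1, fun n => cm_mul_sign hs n u v hu hv⟩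

lemma aux_T_hasDeriv (G : ℕ → ℝ → ℝ) (I : Set ℝ)
    (hGd : ∀ k, ∀ y ∈ I, HasDerivAt (G k) (G (k+1) y) y) :
    ∀ n, ∀ y ∈ I, HasDerivAt (fun z => ∑ k ∈ Finset.range (n+1),
      (-z)^k / (k.factorial:ℝ) * G k z) ((-y)^n / (n.factorial:ℝ) * G (n+1) y) y := by
  intro n
  induction n with
  | zero =>
    intro y hy
    have h := hGd 0 y hy
    have h0 : (fun z : ℝ => ∑ k ∈ Finset.range 1, (-z)^k / (k.factorial:ℝ) * G k z)
        = fun z => G 0 z := by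
      funext z; simp
    rw [h0]
    simpa using h
  | succ n IH =>
    intro y hy
    have hsum : (fun z : ℝ => ∑ k ∈ Finset.range (n+2), (-z)^k / (k.factorial:ℝ) * G k z)
        = fun z => (∑ k ∈ Finset.range (n+1), (-z)^k / (k.factorial:ℝ) * G k z)
          + (-z)^(n+1) / ((n+1).factorial:ℝ) * G (n+1) z := by
      funext z; rw [Finset.sum_range_succ]
    rw [hsum]
    have hpow := (hasDerivAt_neg y).fun_pow (n+1) (f := fun z : ℝ => -z)
    simp only [Nat.add_sub_cancel] at hpow
    have full := (IH y hy).fun_add ((hpow.div_const ((n+1).factorial:ℝ)).fun_mul (hGd (n+1) y hy))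
    refine HasDerivAt.congr_deriv full ?_
    have hfac : (n.factorial:ℝ) ≠ 0 := by positivity
    push_cast [Nat.factorial_succ]
    field_simp
    ring

lemma aux_T_nonneg (G : ℕ → ℝ → ℝ) (J I : Set ℝ) (hIJ : I ⊆ J)
    (hGc : ∀ k, ContinuousOn (G k) J)
    (hGd : ∀ k, ∀ y ∈ I, HasDerivAt (G k) (G (k+1) y) y)
    (hGsign : ∀ n, ∀ y ∈ J, 0 ≤ (-1:ℝ)^n * G (n+1) y)
    (hG00 : 0 ≤ G 0 0)
    (hIpos : ∀ y ∈ I, 0 < y)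
    (hIccJ : ∀ x ∈ I, Icc 0 x ⊆ J) (hIooI : ∀ x ∈ I, Ioo 0 x ⊆ I)
    (n : ℕ) (x : ℝ) (hx : x ∈ I) :
    0 ≤ ∑ k ∈ Finset.range (n+1), (-x)^k / (k.factorial:ℝ) * G k x := by
  have hxpos := hIpos x hx
  have hmono : MonotoneOn (fun z => ∑ k ∈ Finset.range (n+1),
      (-z)^k / (k.factorial:ℝ) * G k z) (Icc 0 x) := by
    apply monotoneOn_of_deriv_nonneg (convex_Icc 0 x)
    · apply continuousOn_finset_sum
      intro k _
      exact (((continuous_neg.pow k).div_const _).continuousOn).mul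
        ((hGc k).mono (hIccJ x hx))
    · rw [interior_Icc]
      intro z hz
      exact (aux_T_hasDeriv G I hGd n z (hIooI x hx hz)).differentiableAt.differentiableWithinAt
    · rw [interior_Icc]
      intro z hz
      have hzI := hIooI x hx hz
      rw [(aux_T_hasDeriv G I hGd n z hzI).deriv]
      have h1 := hGsign n z (hIJ hzI)
      have h2 : (-z:ℝ)^n = (-1)^n * z^n := by rw [neg_pow]
      rw [h2]
      have hz0 : (0:ℝ) ≤ z := le_of_lt hz.1
      have hfac : (0:ℝ) < (n.factorial:ℝ) := by positivity
      have h3 : (-1:ℝ)^n * z^n / (n.factorial:ℝ) * G (n+1) z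
          = (z^n / (n.factorial:ℝ)) * ((-1:ℝ)^n * G (n+1) z) := by ring
      rw [h3]
      exact mul_nonneg (div_nonneg (pow_nonneg hz0 n) hfac.le) h1
  have h0x := hmono (left_mem_Icc.mpr hxpos.le) (right_mem_Icc.mpr hxpos.le) hxpos.le
  have hT0 : (∑ k ∈ Finset.range (n+1), (-(0:ℝ))^k / (k.factorial:ℝ) * G k 0) = G 0 0 := by
    rw [Finset.sum_eq_single 0]
    · simp
    · intro k _ hk
      simp [zero_pow hk]
    · intro h; exact absurd (Finset.mem_range.mpr (Nat.succ_pos n)) h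
  simp only [hT0] at h0x
  linarith

lemma aux_q_formula (G : ℕ → ℝ → ℝ) (I : Set ℝ) (hIopen : IsOpen I)
    (hGd : ∀ k, ∀ y ∈ I, HasDerivAt (G k) (G (k+1) y) y)
    (hIpos : ∀ y ∈ I, 0 < y) :
    ∀ n, ∀ y ∈ I, iteratedDerivWithin n (fun z => G 0 z / z) I y
      = (-1:ℝ)^n * (n.factorial:ℝ) *
        ((∑ k ∈ Finset.range (n+1), (-y)^k / (k.factorial:ℝ) * G k y) / y^(n+1)) := by
  intro n
  induction n with
  | zero =>
    intro y hy
    simp [Finset.sum_range_one]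
  | succ n IH =>
    intro y hy
    have hy0 : y ≠ 0 := (hIpos y hy).ne'
    rw [iteratedDerivWithin_succ, derivWithin_of_isOpen hIopen hy]
    have hev : iteratedDerivWithin n (fun z => G 0 z / z) I =ᶠ[𝓝 y]
        (fun z => (-1:ℝ)^n * (n.factorial:ℝ) *
          ((∑ k ∈ Finset.range (n+1), (-z)^k / (k.factorial:ℝ) * G k z) / z^(n+1))) := by
      filter_upwards [hIopen.mem_nhds hy] with z hz
      exact IH z hz
    rw [hev.deriv_eq]
    have hT := aux_T_hasDeriv G I hGd n y hy
    have hden : HasDerivAt (fun z : ℝ => z^(n+1)) (((n:ℝ)+1) * y^n) y := by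
      simpa using hasDerivAt_pow (n+1) y
    have hdiv := HasDerivAt.const_mul ((-1:ℝ)^n * (n.factorial:ℝ))
      (hT.fun_div hden (pow_ne_zero (n+1) hy0))
    rw [hdiv.deriv]
    conv_rhs => rw [Finset.sum_range_succ]
    set S := ∑ k ∈ Finset.range (n+1), (-y)^k / (k.factorial:ℝ) * G k y with hS
    have hfac : (n.factorial:ℝ) ≠ 0 := by positivity
    have h1 : (-y:ℝ)^n = (-1)^n * y^n := by rw [neg_pow]
    have h2 : (-y:ℝ)^(n+1) = (-1)^(n+1) * y^(n+1) := by rw [neg_pow]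
    rw [h1, h2, pow_succ (-1:ℝ) n]
    push_cast [Nat.factorial_succ]
    field_simp
    ring

theorem rpow_div_x_log_completely_monotone (b : EReal) (hb : 0 < b)
    (f g : ℝ → ℝ)
    (hfpos : ∀ x ∈ {x : ℝ | 0 ≤ x ∧ (x : EReal) < b}, 0 < f x)
    (hlogf_nonneg : ∀ x ∈ {x : ℝ | 0 ≤ x ∧ (x : EReal) < b}, 0 ≤ Real.log (f x))
    (hlogf_diff : DifferentiableOn ℝ (fun x => Real.log (f x))
      {x : ℝ | 0 ≤ x ∧ (x : EReal) < b})
    (hlogf' : CompletelyMonotoneOn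
      (derivWithin (fun x => Real.log (f x)) {x : ℝ | 0 ≤ x ∧ (x : EReal) < b})
      {x : ℝ | 0 ≤ x ∧ (x : EReal) < b})
    (hg : CompletelyMonotoneOn g {x : ℝ | 0 < x ∧ (x : EReal) < b}) :
    LogCompletelyMonotoneOn (fun x => f x ^ (g x / x))
      {x : ℝ | 0 < x ∧ (x : EReal) < b} := by
  set J : Set ℝ := {x : ℝ | 0 ≤ x ∧ (x : EReal) < b} with hJdef
  set I : Set ℝ := {x : ℝ | 0 < x ∧ (x : EReal) < b} with hIdef
  have hIopen : IsOpen I := by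
    have h : I = Ioi 0 ∩ ((↑) : ℝ → EReal) ⁻¹' (Iio b) := rfl
    rw [h]
    exact isOpen_Ioi.inter (isOpen_Iio.preimage continuous_coe_real_ereal)
  have hIu : UniqueDiffOn ℝ I := hIopen.uniqueDiffOn
  have hIJ : I ⊆ J := fun x hx => ⟨hx.1.le, hx.2⟩
  have hIne : I.Nonempty := by
    obtain ⟨c, hc1, hc2⟩ := exists_between hb
    induction c using EReal.rec with
    | bot => exact absurd hc1 (by simp)
    | coe c => exact ⟨c, by exact_mod_cast hc1, hc2⟩
    | top => exact absurd (lt_of_lt_of_le hc2 le_top) (lt_irrefl _)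
  have hJconv : Convex ℝ J := by
    rw [convex_iff_ordConnected]
    constructor
    intro x hx y hy z hz
    exact ⟨le_trans hx.1 hz.1, lt_of_le_of_lt (by exact_mod_cast hz.2) hy.2⟩
  have hJu : UniqueDiffOn ℝ J := by
    apply uniqueDiffOn_convex hJconv
    obtain ⟨c, hc⟩ := hIne
    exact ⟨c, (hIopen.subset_interior_iff.mpr hIJ) hc⟩
  have hJnhds : ∀ y ∈ I, J ∈ 𝓝 y := fun y hy =>
    Filter.mem_of_superset (hIopen.mem_nhds hy) hIJ
  have h0J : (0:ℝ) ∈ J := ⟨le_refl 0, by exact_mod_cast hb⟩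
  have hIpos : ∀ y ∈ I, (0:ℝ) < y := fun y hy => hy.1
  have hIccJ : ∀ x ∈ I, Icc 0 x ⊆ J := by
    intro x hx z hz
    exact ⟨hz.1, lt_of_le_of_lt (by exact_mod_cast hz.2) hx.2⟩
  have hIooI : ∀ x ∈ I, Ioo 0 x ⊆ I := by
    intro x hx z hz
    exact ⟨hz.1, lt_trans (by exact_mod_cast hz.2) hx.2⟩
  -- the function H = log ∘ f is smooth on J
  have hH : ContDiffOn ℝ (⊤:ℕ∞) (fun x => Real.log (f x)) J :=
    (contDiffOn_infty_iff_derivWithin hJu).mpr ⟨hlogf_diff, hlogf'.1⟩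
  set G : ℕ → ℝ → ℝ := fun k => iteratedDerivWithin k (fun x => Real.log (f x)) J with hGdef
  have hG0 : G 0 = fun x => Real.log (f x) := by
    funext z; simp [hGdef]
  have hGc : ∀ k, ContinuousOn (G k) J := fun k =>
    hH.continuousOn_iteratedDerivWithin (by exact_mod_cast le_top) hJu
  have hGsign : ∀ n, ∀ y ∈ J, 0 ≤ (-1:ℝ)^n * G (n+1) y := by
    intro n y hy
    have h1 : G (n+1) y = iteratedDerivWithin n
        (derivWithin (fun x => Real.log (f x)) J) J y :=
      congrFun iteratedDerivWithin_succ' y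
    rw [h1]
    exact hlogf'.2 n y hy
  have hGd : ∀ k, ∀ y ∈ I, HasDerivAt (G k) (G (k+1) y) y := by
    intro k y hy
    have h1 : DifferentiableWithinAt ℝ (G k) J y :=
      (hH.differentiableOn_iteratedDerivWithin
        (by exact_mod_cast lt_top_iff_ne_top.mpr (by simp : (k:ℕ∞) ≠ ⊤)) hJu) y (hIJ hy)
    have h2 := h1.hasDerivWithinAt
    rw [← iteratedDerivWithin_succ] at h2
    exact h2.hasDerivAt (hJnhds y hy)
  have hG00 : 0 ≤ G 0 0 := by
    rw [hG0]
    exact hlogf_nonneg 0 h0J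
  -- q = H / x is completely monotone on I
  have hq : CompletelyMonotoneOn (fun z => G 0 z / z) I := by
    constructor
    · exact ContDiffOn.div (hG0 ▸ hH.mono hIJ) contDiffOn_id
        (fun y hy => (hIpos y hy).ne')
    · intro n y hy
      rw [aux_q_formula G I hIopen hGd hIpos n y hy]
      have hT := aux_T_nonneg G J I hIJ hGc hGd hGsign hG00 hIpos hIccJ hIooI n y hy
      have hy1 : (0:ℝ) < y^(n+1) := pow_pos (hIpos y hy) (n+1)
      have h1 : (-1:ℝ)^n * (-1)^n = 1 := by
        rw [← pow_add]
        exact Even.neg_one_pow ⟨n, rfl⟩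
      have h2 : (-1:ℝ)^n * ((-1:ℝ)^n * (n.factorial:ℝ) *
          ((∑ k ∈ Finset.range (n+1), (-y)^k / (k.factorial:ℝ) * G k y) / y^(n+1)))
          = ((-1:ℝ)^n * (-1)^n) * ((n.factorial:ℝ) *
          ((∑ k ∈ Finset.range (n+1), (-y)^k / (k.factorial:ℝ) * G k y) / y^(n+1))) := by
        ring
      rw [h2, h1, one_mul]
      positivity
  have hP := cm_mul_s10 hIu hg hq
  have hEq : ∀ x ∈ I, Real.log (f x ^ (g x / x)) = g x * (G 0 x / x) := by
    intro x hx
    rw [Real.log_rpow (hfpos x (hIJ hx)), hG0]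
    ring
  refine ⟨?_, ?_, ?_⟩
  · intro x hx
    exact Real.rpow_pos_of_pos (hfpos x (hIJ hx)) _
  · exact hP.1.congr hEq
  · intro n hn x hx
    have h1 : iteratedDerivWithin n (fun x => Real.log (f x ^ (g x / x))) I x
        = iteratedDerivWithin n (fun y => g y * (G 0 y / y)) I x :=
      iteratedDerivWithin_congr (fun z hz => hEq z hz) hx
    rw [h1]
    exact hP.2 n x hx
end

section
/- Let a, b, μ ≥ 0 be real numbers. Then the function f(x) := (a + b/x)^μ is completely monotone on (0, ∞). -/
open Set Real

namespace CMAux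

/-- A summand: `(D, ν, p)` represents `x ↦ D * (a + b/x) ^ ν / x ^ p`. -/
noncomputable def term (a b : ℝ) (t : ℝ × ℝ × ℕ) (x : ℝ) : ℝ :=
  t.1 * (a + b / x) ^ t.2.1 / x ^ t.2.2

noncomputable def sumT (a b : ℝ) (L : List (ℝ × ℝ × ℕ)) (x : ℝ) : ℝ :=
  (L.map fun t => term a b t x).sum

def Valid (L : List (ℝ × ℝ × ℕ)) : Prop :=
  ∀ t ∈ L, 0 ≤ t.1 ∧ 0 ≤ t.2.1 + (t.2.2 : ℝ)

noncomputable def step (a b : ℝ) (t : ℝ × ℝ × ℕ) : List (ℝ × ℝ × ℕ) :=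
  if 0 ≤ t.2.1 then
    [(t.1 * t.2.1 * b, t.2.1 - 1, t.2.2 + 2), (t.1 * t.2.2, t.2.1, t.2.2 + 1)]
  else
    [(t.1 * (t.2.1 + t.2.2), t.2.1, t.2.2 + 1), (t.1 * (-t.2.1 * a), t.2.1 - 1, t.2.2 + 1)]

lemma step_valid {a b : ℝ} (ha : 0 ≤ a) (hb : 0 ≤ b) {t : ℝ × ℝ × ℕ}
    (ht : 0 ≤ t.1 ∧ 0 ≤ t.2.1 + (t.2.2 : ℝ)) :
    ∀ s ∈ step a b t, 0 ≤ s.1 ∧ 0 ≤ s.2.1 + (s.2.2 : ℝ) := by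
  obtain ⟨D, ν, p⟩ := t
  obtain ⟨hD, hs⟩ := ht
  simp only [step]
  split_ifs with hν
  · intro s hs'
    simp only [List.mem_cons, List.mem_singleton] at hs'
    rcases hs' with rfl | rfl | h
    · refine ⟨by positivity, ?_⟩
      push_cast
      simp only at hs ⊢
      linarith
    · refine ⟨by positivity, ?_⟩
      push_cast
      simp only at hs ⊢
      linarith
    · exact absurd h List.not_mem_nil
  · push_neg at hν
    intro s hs'
    simp only [List.mem_cons, List.mem_singleton] at hs'
    rcases hs' with rfl | rfl | h
    · refine ⟨mul_nonneg hD (by simpa using hs), ?_⟩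
      push_cast
      simp only at hs ⊢
      linarith
    · refine ⟨mul_nonneg hD (mul_nonneg (by linarith) ha), ?_⟩
      push_cast
      simp only at hs ⊢
      linarith
    · exact absurd h List.not_mem_nil

lemma term_hasDerivAt {a b : ℝ} {t : ℝ × ℝ × ℕ} {x : ℝ} (hx : 0 < x)
    (hpos : 0 < a + b / x) (hval : 0 ≤ t.2.1 + (t.2.2 : ℝ)) :
    HasDerivAt (fun y => term a b t y) (-(sumT a b (step a b t) x)) x := by
  obtain ⟨D, ν, p⟩ := t
  have hx0 : x ≠ 0 := hx.ne'
  have h0 : HasDerivAt (fun y : ℝ => a + b / y) (-(b / x ^ 2)) x := by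
    have h1 : HasDerivAt (fun y : ℝ => y⁻¹) (-(x ^ 2)⁻¹) x := hasDerivAt_inv hx0
    have h2 := (h1.const_mul b).const_add a
    simp only [← div_eq_mul_inv] at h2
    refine h2.congr_deriv ?_
    rw [div_eq_mul_inv]
    ring
  have h1 : HasDerivAt (fun y : ℝ => (a + b / y) ^ ν)
      (-(b / x ^ 2) * ν * (a + b / x) ^ (ν - 1)) x :=
    h0.rpow_const (Or.inl hpos.ne')
  have h2 : HasDerivAt (fun y : ℝ => y ^ p) ((p : ℝ) * x ^ (p - 1)) x := hasDerivAt_pow p x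
  have h3 := (h1.const_mul D).div h2 (pow_ne_zero p hx0)
  have hA : (a + b / x) ^ ν = (a + b / x) ^ (ν - 1) * (a + b / x) := by
    rw [← Real.rpow_add_one hpos.ne' (ν - 1)]
    ring_nf
  have key : -(sumT a b (step a b (D, ν, p)) x) =
      (D * (-(b / x ^ 2) * ν * (a + b / x) ^ (ν - 1)) * x ^ p -
        D * (a + b / x) ^ ν * ((p : ℝ) * x ^ (p - 1))) / (x ^ p) ^ 2 := by
    obtain _ | q := p
    · simp only [sumT, step]
      split_ifs with hν
      · simp only [List.map_cons, List.map_nil, List.sum_cons, List.sum_nil, term]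
        rw [hA]
        generalize (a + b / x) ^ (ν - 1) = P
        push_cast
        field_simp
        ring
      · simp only [List.map_cons, List.map_nil, List.sum_cons, List.sum_nil, term]
        rw [hA]
        generalize (a + b / x) ^ (ν - 1) = P
        push_cast
        field_simp
        ring
    · simp only [sumT, step]
      split_ifs with hν
      · simp only [List.map_cons, List.map_nil, List.sum_cons, List.sum_nil, term,
          Nat.add_sub_cancel]
        rw [hA]
        generalize (a + b / x) ^ (ν - 1) = P
        push_cast
        field_simp
        ring
      · simp only [List.map_cons, List.map_nil, List.sum_cons, List.sum_nil, term,
          Nat.add_sub_cancel]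
        rw [hA]
        generalize (a + b / x) ^ (ν - 1) = P
        push_cast
        field_simp
        ring
  rw [key]
  have hfun : (fun y => term a b (D, ν, p) y) = fun y => D * (a + b / y) ^ ν / y ^ p := by
    funext y
    simp [term]
  rw [hfun]
  exact h3

lemma sumT_hasDerivAt {a b : ℝ} {x : ℝ} (hx : 0 < x) (hpos : 0 < a + b / x)
    (L : List (ℝ × ℝ × ℕ)) (hL : Valid L) :
    HasDerivAt (fun y => sumT a b L y) (-(sumT a b (L.flatMap (step a b)) x)) x := by
  induction L with
  | nil =>
    simpa [sumT] using (hasDerivAt_const x (0 : ℝ))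
  | cons t L ih =>
    have ht := hL t List.mem_cons_self
    have hL' : Valid L := fun s hs => hL s (List.mem_cons_of_mem t hs)
    have h1 := term_hasDerivAt hx hpos ht.2 (t := t)
    have h2 := ih hL'
    have h3 := h1.add h2
    have hfun : (fun y => sumT a b (t :: L) y) = fun y => term a b t y + sumT a b L y := by
      funext y
      simp [sumT]
    have hval : -(sumT a b ((t :: L).flatMap (step a b)) x) =
        -(sumT a b (step a b t) x) + -(sumT a b (L.flatMap (step a b)) x) := by
      simp [sumT, List.flatMap_cons]
      ring
    rw [hfun, hval]
    exact h3

lemma main {a b μ : ℝ} (ha : 0 ≤ a) (hb : 0 ≤ b) (hμ : 0 ≤ μ)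
    (hab : ∀ x ∈ Ioi (0:ℝ), 0 < a + b / x) (n : ℕ) :
    ∃ L : List (ℝ × ℝ × ℕ), Valid L ∧
      ∀ x ∈ Ioi (0:ℝ),
        iteratedDeriv n (fun x => (a + b / x) ^ μ) x = (-1 : ℝ) ^ n * sumT a b L x := by
  induction n with
  | zero =>
    refine ⟨[(1, μ, 0)], ?_, ?_⟩
    · intro t ht
      simp only [List.mem_singleton] at ht
      subst ht
      exact ⟨zero_le_one, by simpa using hμ⟩
    · intro x hx
      simp [sumT, term]
  | succ n ih =>
    obtain ⟨L, hV, hEq⟩ := ih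
    refine ⟨L.flatMap (step a b), ?_, ?_⟩
    · intro t ht
      rw [List.mem_flatMap] at ht
      obtain ⟨s, hsL, hts⟩ := ht
      exact step_valid ha hb (hV s hsL) t hts
    · intro x hx
      have hx' : (0:ℝ) < x := hx
      rw [iteratedDeriv_succ]
      have hev : iteratedDeriv n (fun x => (a + b / x) ^ μ) =ᶠ[nhds x]
          fun y => (-1 : ℝ) ^ n * sumT a b L y := by
        filter_upwards [Ioi_mem_nhds hx'] with y hy using hEq y hy
      rw [hev.deriv_eq]
      have hd : HasDerivAt (fun y => (-1 : ℝ) ^ n * sumT a b L y)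
          ((-1 : ℝ) ^ n * -(sumT a b (L.flatMap (step a b)) x)) x :=
        (sumT_hasDerivAt hx' (hab x hx) L hV).const_mul _
      rw [hd.deriv]
      ring

lemma iteratedDerivWithin_of_isOpen' {f : ℝ → ℝ} {s : Set ℝ} {x : ℝ} (n : ℕ)
    (hs : IsOpen s) (hx : x ∈ s) :
    iteratedDerivWithin n f s x = iteratedDeriv n f x := by
  rw [iteratedDerivWithin_eq_iteratedFDerivWithin, iteratedDeriv_eq_iteratedFDeriv,
    iteratedFDerivWithin_of_isOpen n hs hx]

lemma iteratedDeriv_const' (n : ℕ) (c : ℝ) :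
    iteratedDeriv n (fun _ : ℝ => c) = fun _ => if n = 0 then c else 0 := by
  induction n with
  | zero => simp [iteratedDeriv_zero]
  | succ n ih =>
    rw [iteratedDeriv_succ, ih]
    funext x
    rcases Nat.eq_zero_or_pos n with rfl | hn
    · simp
    · simp [Nat.pos_iff_ne_zero.mp hn]

end CMAux

theorem rpow_a_add_b_div_x_completely_monotone (a b μ : ℝ)
    (ha : 0 ≤ a) (hb : 0 ≤ b) (hμ : 0 ≤ μ) :
    CompletelyMonotoneOn (fun x => (a + b / x) ^ μ) (Set.Ioi 0) := by
  by_cases hab0 : a = 0 ∧ b = 0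
  · obtain ⟨rfl, rfl⟩ := hab0
    have hf : (fun x : ℝ => (0 + 0 / x) ^ μ) = fun _ : ℝ => (0 : ℝ) ^ μ := by
      funext x; simp
    rw [hf]
    constructor
    · exact contDiffOn_const
    · intro n x hx
      rw [CMAux.iteratedDerivWithin_of_isOpen' n isOpen_Ioi hx,
        CMAux.iteratedDeriv_const']
      rcases Nat.eq_zero_or_pos n with rfl | hn
      · simpa using Real.rpow_nonneg le_rfl μ
      · simp [Nat.pos_iff_ne_zero.mp hn]
  · have hab : ∀ x ∈ Ioi (0:ℝ), 0 < a + b / x := by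
      intro x hx
      rcases lt_or_eq_of_le ha with h | h
      · have : 0 ≤ b / x := div_nonneg hb (le_of_lt hx)
        linarith
      · have hbne : b ≠ 0 := fun hb0 => hab0 ⟨h.symm, hb0⟩
        have hbpos : 0 < b := lt_of_le_of_ne hb (Ne.symm hbne)
        have : 0 < b / x := div_pos hbpos hx
        linarith
    constructor
    · intro x hx
      have hx' : (0:ℝ) < x := hx
      have hcd : ContDiffAt ℝ (⊤ : ℕ∞) (fun x : ℝ => (a + b / x) ^ μ) x := by
        have h1 : ContDiffAt ℝ (⊤ : ℕ∞) (fun y : ℝ => a + b / y) x :=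
          contDiffAt_const.add (contDiffAt_const.div contDiffAt_id hx'.ne')
        exact h1.rpow_const_of_ne (hab x hx).ne'
      exact hcd.contDiffWithinAt
    · intro n x hx
      obtain ⟨L, hV, hEq⟩ := CMAux.main ha hb hμ hab n
      rw [CMAux.iteratedDerivWithin_of_isOpen' n isOpen_Ioi hx, hEq x hx, ← mul_assoc,
        ← mul_pow]
      simp only [neg_mul, one_mul, neg_neg, one_pow, one_mul]
      apply List.sum_nonneg
      intro y hy
      rw [List.mem_map] at hy
      obtain ⟨t, htL, rfl⟩ := hy
      have hx' : (0:ℝ) < x := hx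
      have := (hV t htL).1
      have hA : 0 ≤ a + b / x := (hab x hx).le
      unfold CMAux.term
      positivity
end

section
/- Let a, b, c, d, α be real numbers with a > 0 and α ≥ -d/c, and suppose that either (c = a and b ≥ d) or (0 < c < a and ad - bc ≤ 0). Then the function f(x) := log((ax + b)/(cx + d)) is completely monotone on (α, ∞). -/
open Set Real Topology

private lemma my_iteratedDerivWithin_of_isOpen {f : ℝ → ℝ} {s : Set ℝ} {x : ℝ} (n : ℕ)
    (hs : IsOpen s) (hx : x ∈ s) : iteratedDerivWithin n f s x = iteratedDeriv n f x := by
  rw [iteratedDerivWithin, iteratedDeriv, iteratedFDerivWithin_of_isOpen n hs hx]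

private lemma hasDerivAt_log_affine (p q x : ℝ) (h : p * x + q ≠ 0) :
    HasDerivAt (fun y => Real.log (p * y + q)) (p / (p * x + q)) x := by
  have h1 : HasDerivAt (fun y => p * y + q) p x := by
    simpa using ((hasDerivAt_id x).const_mul p).add_const q
  have := (Real.hasDerivAt_log h).comp x h1
  simpa [div_eq_inv_mul, Function.comp_def] using this

private lemma hasDerivAt_const_div_pow (C p q x : ℝ) (k : ℕ) (h : p * x + q ≠ 0) :
    HasDerivAt (fun y => C / (p * y + q) ^ (k + 1))
      (-(C * (k + 1) * p) / (p * x + q) ^ (k + 2)) x := by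
  have h1 : HasDerivAt (fun y => p * y + q) p x := by
    simpa using ((hasDerivAt_id x).const_mul p).add_const q
  have h2 : HasDerivAt (fun y => (p * y + q) ^ (k + 1))
      ((k + 1 : ℕ) * (p * x + q) ^ k * p) x := by
    simpa using h1.fun_pow (k + 1)
  have h3 : HasDerivAt (fun y => C * ((p * y + q) ^ (k + 1))⁻¹) _ x :=
    (h2.inv (pow_ne_zero _ h)).const_mul C
  have hfe : (fun y => C / (p * y + q) ^ (k + 1)) = fun y => C * ((p * y + q) ^ (k + 1))⁻¹ :=
    funext fun y => div_eq_mul_inv _ _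
  rw [hfe]
  convert h3 using 1
  field_simp
  push_cast
  ring

private lemma iter_formula (a b c d : ℝ) (s : Set ℝ) (hs : IsOpen s)
    (hu : ∀ x ∈ s, 0 < a * x + b) (hv : ∀ x ∈ s, 0 < c * x + d) :
    ∀ m : ℕ, ∀ x ∈ s,
      iteratedDeriv (m + 1) (fun y => Real.log (a * y + b) - Real.log (c * y + d)) x
        = (-1 : ℝ) ^ m * (m.factorial : ℝ) *
            (a ^ (m + 1) / (a * x + b) ^ (m + 1) - c ^ (m + 1) / (c * x + d) ^ (m + 1)) := by
  intro m
  induction m with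
  | zero =>
    intro x hx
    have h := ((hasDerivAt_log_affine a b x (hu x hx).ne').fun_sub
      (hasDerivAt_log_affine c d x (hv x hx).ne'))
    rw [iteratedDeriv_one, h.deriv]
    norm_num
  | succ m ih =>
    intro x hx
    have hev : iteratedDeriv (m + 1) (fun y => Real.log (a * y + b) - Real.log (c * y + d))
        =ᶠ[𝓝 x] fun y => (-1 : ℝ) ^ m * (m.factorial : ℝ) *
            (a ^ (m + 1) / (a * y + b) ^ (m + 1) - c ^ (m + 1) / (c * y + d) ^ (m + 1)) := by
      filter_upwards [hs.mem_nhds hx] with y hy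
      exact ih y hy
    rw [iteratedDeriv_succ, hev.deriv_eq]
    set K : ℝ := (-1 : ℝ) ^ m * (m.factorial : ℝ) with hK
    have hda := hasDerivAt_const_div_pow (K * a ^ (m + 1)) a b x m (hu x hx).ne'
    have hdc := hasDerivAt_const_div_pow (K * c ^ (m + 1)) c d x m (hv x hx).ne'
    have hsum := hda.fun_sub hdc
    have hfun : (fun y => K * a ^ (m + 1) / (a * y + b) ^ (m + 1)
          - K * c ^ (m + 1) / (c * y + d) ^ (m + 1))
        = fun y => K *
            (a ^ (m + 1) / (a * y + b) ^ (m + 1) - c ^ (m + 1) / (c * y + d) ^ (m + 1)) := by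
      funext y; ring
    rw [← hfun, hsum.deriv, hK]
    have hfac : (((m + 1).factorial : ℕ) : ℝ) = ((m : ℝ) + 1) * (m.factorial : ℝ) := by
      rw [Nat.factorial_succ]; push_cast; ring
    rw [hfac]
    ring_nf

theorem log_linear_fraction_completely_monotone (a b c d α : ℝ)
    (ha : 0 < a) (hα : -d / c ≤ α)
    (hcase : (c = a ∧ d ≤ b) ∨ (0 < c ∧ c < a ∧ a * d - b * c ≤ 0)) :
    CompletelyMonotoneOn (fun x => Real.log ((a * x + b) / (c * x + d)))
      (Set.Ioi α) := by
  have hc : 0 < c := by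
    rcases hcase with ⟨h1, _⟩ | ⟨h1, _⟩
    · rw [h1]; exact ha
    · exact h1
  have hadbc : a * d ≤ b * c := by
    rcases hcase with ⟨h1, h2⟩ | ⟨_, _, h3⟩
    · rw [h1]; nlinarith
    · linarith
  set s : Set ℝ := Set.Ioi α with hsdef
  have hsopen : IsOpen s := isOpen_Ioi
  have hv : ∀ x ∈ s, 0 < c * x + d := by
    intro x hx
    have hx' : -d / c < x := lt_of_le_of_lt hα hx
    have := (div_lt_iff₀ hc).mp hx'
    linarith
  have hu : ∀ x ∈ s, 0 < a * x + b := by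
    intro x hx
    have hx' : -d / c < x := lt_of_le_of_lt hα hx
    rcases hcase with ⟨h1, h2⟩ | ⟨_, hca, h3⟩
    · have := hv x hx; rw [h1] at *; linarith
    · have h4 : a * (-d / c) < a * x := by exact mul_lt_mul_of_pos_left hx' ha
      have h5 : a * (-d / c) = -(a * d) / c := by ring
      have h6 : -(a * d) / c + b ≥ 0 := by
        rw [ge_iff_le, ← sub_nonneg]
        have : -(a * d) / c + b - 0 = (b * c - a * d) / c := by field_simp; ring
        rw [this]
        apply div_nonneg (by linarith) hc.le
      linarith
  have huv : ∀ x ∈ s, c * x + d ≤ a * x + b := by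
    intro x hx
    have hx' : -d / c < x := lt_of_le_of_lt hα hx
    rcases hcase with ⟨h1, h2⟩ | ⟨_, hca, h3⟩
    · rw [h1]; linarith
    · have h4 : (a - c) * (-d / c) < (a - c) * x := mul_lt_mul_of_pos_left hx' (by linarith)
      have h5 : (a - c) * (-d / c) + (b - d) ≥ 0 := by
        rw [ge_iff_le, ← sub_nonneg]
        have : (a - c) * (-d / c) + (b - d) - 0 = (b * c - a * d) / c := by field_simp; ring
        rw [this]
        apply div_nonneg (by linarith) hc.le
      linarith
  have hEq : Set.EqOn (fun x => Real.log ((a * x + b) / (c * x + d)))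
      (fun x => Real.log (a * x + b) - Real.log (c * x + d)) s := by
    intro x hx
    exact Real.log_div (hu x hx).ne' (hv x hx).ne'
  have haff1 : ContDiffOn ℝ (⊤ : ℕ∞) (fun x : ℝ => a * x + b) s :=
    ((contDiff_const.mul contDiff_id).add contDiff_const).contDiffOn
  have haff2 : ContDiffOn ℝ (⊤ : ℕ∞) (fun x : ℝ => c * x + d) s :=
    ((contDiff_const.mul contDiff_id).add contDiff_const).contDiffOn
  have hcd : ContDiffOn ℝ (⊤ : ℕ∞) (fun x => Real.log (a * x + b) - Real.log (c * x + d)) s :=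
    (haff1.log (fun x hx => (hu x hx).ne')).sub (haff2.log (fun x hx => (hv x hx).ne'))
  constructor
  · exact hcd.congr hEq
  · intro n x hx
    cases n with
    | zero =>
      simp only [pow_zero, one_mul, iteratedDerivWithin_zero]
      apply Real.log_nonneg
      rw [le_div_iff₀ (hv x hx)]
      simpa using huv x hx
    | succ m =>
      have h1 : iteratedDerivWithin (m + 1)
            (fun x => Real.log ((a * x + b) / (c * x + d))) s x
          = iteratedDeriv (m + 1) (fun x => Real.log (a * x + b) - Real.log (c * x + d)) x := by
        rw [my_iteratedDerivWithin_of_isOpen (m + 1) hsopen hx]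
        exact hEq.iteratedDeriv_of_isOpen hsopen (m + 1) hx
      rw [h1, iter_formula a b c d s hsopen hu hv m x hx]
      have hkey : (a / (a * x + b)) ^ (m + 1) ≤ (c / (c * x + d)) ^ (m + 1) := by
        apply pow_le_pow_left₀ (div_nonneg ha.le (hu x hx).le)
        rw [div_le_div_iff₀ (hu x hx) (hv x hx)]
        nlinarith
      rw [div_pow, div_pow] at hkey
      have hsign : (-1 : ℝ) ^ (m + 1) * ((-1 : ℝ) ^ m * (m.factorial : ℝ) *
          (a ^ (m + 1) / (a * x + b) ^ (m + 1) - c ^ (m + 1) / (c * x + d) ^ (m + 1)))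
          = (m.factorial : ℝ) *
            (c ^ (m + 1) / (c * x + d) ^ (m + 1) - a ^ (m + 1) / (a * x + b) ^ (m + 1)) := by
        have h2 : (-1 : ℝ) ^ (m + 1) * (-1 : ℝ) ^ m = -1 := by
          rw [← pow_add]
          exact Odd.neg_one_pow ⟨m, by ring⟩
        calc (-1 : ℝ) ^ (m + 1) * ((-1 : ℝ) ^ m * (m.factorial : ℝ) *
            (a ^ (m + 1) / (a * x + b) ^ (m + 1) - c ^ (m + 1) / (c * x + d) ^ (m + 1)))
            = ((-1 : ℝ) ^ (m + 1) * (-1 : ℝ) ^ m) * ((m.factorial : ℝ) *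
              (a ^ (m + 1) / (a * x + b) ^ (m + 1) - c ^ (m + 1) / (c * x + d) ^ (m + 1))) := by
              ring
          _ = _ := by rw [h2]; ring
      rw [hsign]
      have : (0:ℝ) ≤ (m.factorial : ℝ) := by positivity
      nlinarith [hkey, this]
end

section
/- Let a, b, c, d, x₀ be real numbers with a > 0, and suppose that either (c = a and b ≥ d) or (0 < c < a and ad - bc ≤ 0). Let g : ℝ → ℝ be completely monotone on (x₀, ∞), and set α := max(x₀, -d/c). Then the function f(x) := ((ax + b)/(cx + d))^{g(x)} is logarithmically completely monotone on (α, ∞), and it is completely monotone on (α, ∞). -/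
open Set Real

lemma iteratedDerivWithin_of_isOpen' {f : ℝ → ℝ} {s : Set ℝ} (hs : IsOpen s) {x : ℝ}
    (hx : x ∈ s) (n : ℕ) : iteratedDerivWithin n f s x = iteratedDeriv n f x := by
  simp only [iteratedDerivWithin_eq_iteratedFDerivWithin, iteratedDeriv_eq_iteratedFDeriv,
    iteratedFDerivWithin_of_isOpen n hs hx]

lemma diffAt_iteratedDeriv {f : ℝ → ℝ} {s : Set ℝ} (hs : IsOpen s)
    (hf : ContDiffOn ℝ (⊤ : ℕ∞) f s) {x : ℝ} (hx : x ∈ s) (k : ℕ) :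
    DifferentiableAt ℝ (iteratedDeriv k f) x := by
  have h1 : DifferentiableWithinAt ℝ (iteratedDerivWithin k f s) s x :=
    (hf.differentiableOn_iteratedDerivWithin (by exact_mod_cast WithTop.coe_lt_top k)
      hs.uniqueDiffOn) x hx
  have h2 : DifferentiableAt ℝ (iteratedDerivWithin k f s) x :=
    h1.differentiableAt (hs.mem_nhds hx)
  exact h2.congr_of_eventuallyEq <| Filter.eventuallyEq_of_mem (hs.mem_nhds hx)
    fun y hy => (iteratedDerivWithin_of_isOpen' hs hy k).symm

lemma hasDerivAt_iteratedDeriv {f : ℝ → ℝ} {s : Set ℝ} (hs : IsOpen s)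
    (hf : ContDiffOn ℝ (⊤ : ℕ∞) f s) {x : ℝ} (hx : x ∈ s) (k : ℕ) :
    HasDerivAt (iteratedDeriv k f) (iteratedDeriv (k + 1) f x) x := by
  rw [iteratedDeriv_succ]
  exact (diffAt_iteratedDeriv hs hf hx k).hasDerivAt

lemma iteratedDeriv_mul_of_isOpen {s : Set ℝ} (hs : IsOpen s) {u v : ℝ → ℝ}
    (hu : ContDiffOn ℝ (⊤ : ℕ∞) u s) (hv : ContDiffOn ℝ (⊤ : ℕ∞) v s) :
    ∀ n : ℕ, ∀ x ∈ s, iteratedDeriv n (fun y => u y * v y) x =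
      ∑ k ∈ Finset.range (n + 1),
        (n.choose k : ℝ) * (iteratedDeriv k u x * iteratedDeriv (n - k) v x) := by
  intro n
  induction n with
  | zero => intro x hx; simp
  | succ n ih =>
    intro x hx
    have hev : iteratedDeriv n (fun y => u y * v y) =ᶠ[nhds x]
        fun y => ∑ k ∈ Finset.range (n + 1),
          (n.choose k : ℝ) * (iteratedDeriv k u y * iteratedDeriv (n - k) v y) :=
      Filter.eventuallyEq_of_mem (hs.mem_nhds hx) fun y hy => ih y hy
    rw [iteratedDeriv_succ, hev.deriv_eq]
    have hterm : ∀ k ∈ Finset.range (n + 1),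
        HasDerivAt (fun y => (n.choose k : ℝ) * (iteratedDeriv k u y * iteratedDeriv (n - k) v y))
          ((n.choose k : ℝ) * (iteratedDeriv (k + 1) u x * iteratedDeriv (n - k) v x
            + iteratedDeriv k u x * iteratedDeriv (n - k + 1) v x)) x := by
      intro k _
      exact ((hasDerivAt_iteratedDeriv hs hu hx k).mul
        (hasDerivAt_iteratedDeriv hs hv hx (n - k))).const_mul _
    rw [(HasDerivAt.fun_sum hterm).deriv]
    rw [Finset.sum_choose_succ_mul (fun i j => iteratedDeriv i u x * iteratedDeriv j v x) n,
      ← Finset.sum_add_distrib]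
    refine Finset.sum_congr rfl fun k hk => ?_
    have hk' : n - k + 1 = n + 1 - k := by
      have := Finset.mem_range.mp hk; omega
    rw [← hk']
    ring

lemma iteratedDeriv_logdiff (p q r s : ℝ) :
    ∀ n : ℕ, ∀ x : ℝ, 0 < p * x + q → 0 < r * x + s →
      iteratedDeriv (n + 1) (fun y => Real.log (p * y + q) - Real.log (r * y + s)) x =
        (-1 : ℝ) ^ n * n.factorial *
          ((p / (p * x + q)) ^ (n + 1) - (r / (r * x + s)) ^ (n + 1)) := by
  have hw1 : ∀ x : ℝ, HasDerivAt (fun y => p * y + q) p x := by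
    intro x
    simpa using ((hasDerivAt_id x).const_mul p).add_const q
  have hw2 : ∀ x : ℝ, HasDerivAt (fun y => r * y + s) r x := by
    intro x
    simpa using ((hasDerivAt_id x).const_mul r).add_const s
  intro n
  induction n with
  | zero =>
    intro x hx1 hx2
    have h1 : HasDerivAt (fun y => Real.log (p * y + q) - Real.log (r * y + s))
        (p / (p * x + q) - r / (r * x + s)) x :=
      ((hw1 x).log hx1.ne').sub ((hw2 x).log hx2.ne')
    rw [iteratedDeriv_one, h1.deriv]
    simp
  | succ n ih =>
    intro x hx1 hx2
    have hV : IsOpen {y : ℝ | 0 < p * y + q ∧ 0 < r * y + s} := by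
      have h1 : Continuous fun y : ℝ => p * y + q := by continuity
      have h2 : Continuous fun y : ℝ => r * y + s := by continuity
      exact (isOpen_Ioi.preimage h1).inter (isOpen_Ioi.preimage h2)
    have hmem : {y : ℝ | 0 < p * y + q ∧ 0 < r * y + s} ∈ nhds x :=
      hV.mem_nhds ⟨hx1, hx2⟩
    have hev : iteratedDeriv (n + 1) (fun y => Real.log (p * y + q) - Real.log (r * y + s))
        =ᶠ[nhds x] fun y => (-1 : ℝ) ^ n * n.factorial *
          ((p / (p * y + q)) ^ (n + 1) - (r / (r * y + s)) ^ (n + 1)) :=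
      Filter.eventuallyEq_of_mem hmem fun y hy => ih y hy.1 hy.2
    rw [iteratedDeriv_succ, hev.deriv_eq]
    have hd1 : HasDerivAt (fun y => p / (p * y + q))
        ((0 * (p * x + q) - p * p) / (p * x + q) ^ 2) x :=
      (hasDerivAt_const x p).div (hw1 x) hx1.ne'
    have hd2 : HasDerivAt (fun y => r / (r * y + s))
        ((0 * (r * x + s) - r * r) / (r * x + s) ^ 2) x :=
      (hasDerivAt_const x r).div (hw2 x) hx2.ne'
    have hD : HasDerivAt (fun y => (-1 : ℝ) ^ n * n.factorial *
        ((p / (p * y + q)) ^ (n + 1) - (r / (r * y + s)) ^ (n + 1)))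
        ((-1 : ℝ) ^ n * n.factorial *
          (((n + 1 : ℕ) : ℝ) * (p / (p * x + q)) ^ n *
            ((0 * (p * x + q) - p * p) / (p * x + q) ^ 2)
          - ((n + 1 : ℕ) : ℝ) * (r / (r * x + s)) ^ n *
            ((0 * (r * x + s) - r * r) / (r * x + s) ^ 2))) x :=
      ((hd1.pow (n + 1)).sub (hd2.pow (n + 1))).const_mul _
    rw [hD.deriv, Nat.factorial_succ]
    push_cast
    have h1 : (p * x + q) ≠ 0 := hx1.ne'
    have h2 : (r * x + s) ≠ 0 := hx2.ne'
    simp only [div_eq_mul_inv, ← inv_pow]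
    ring

lemma exp_completely_monotone {s : Set ℝ} (hs : IsOpen s) {u : ℝ → ℝ}
    (hu : ContDiffOn ℝ (⊤ : ℕ∞) u s)
    (hmono : ∀ n, 1 ≤ n → ∀ x ∈ s, 0 ≤ (-1 : ℝ) ^ n * iteratedDeriv n u x) :
    ∀ n, ∀ x ∈ s, 0 ≤ (-1 : ℝ) ^ n * iteratedDeriv n (fun y => Real.exp (u y)) x := by
  intro n
  induction n using Nat.strong_induction_on with
  | _ n ih =>
    match n with
    | 0 =>
      intro x hx
      simpa using (Real.exp_pos (u x)).le
    | Nat.succ n =>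
      intro x hx
      have hexp : ContDiffOn ℝ (⊤ : ℕ∞) (fun y => Real.exp (u y)) s :=
        Real.contDiff_exp.comp_contDiffOn hu
      have hdu : ContDiffOn ℝ (⊤ : ℕ∞) (deriv u) s := hu.deriv_of_isOpen hs (by simp)
      have heq : Set.EqOn (deriv fun y => Real.exp (u y))
          (fun y => deriv u y * Real.exp (u y)) s := by
        intro y hy
        have hdy : DifferentiableAt ℝ u y :=
          (hu.contDiffAt (hs.mem_nhds hy)).differentiableAt (by simp)
        rw [deriv_exp hdy]
        ring
      rw [iteratedDeriv_succ', heq.iteratedDeriv_of_isOpen hs n hx,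
        iteratedDeriv_mul_of_isOpen hs hdu hexp n x hx, Finset.mul_sum]
      apply Finset.sum_nonneg
      intro k hk
      have hk' : k ≤ n := Nat.lt_succ_iff.mp (Finset.mem_range.mp hk)
      have h1 : iteratedDeriv k (deriv u) x = iteratedDeriv (k + 1) u x := by
        rw [← iteratedDeriv_succ']
      rw [h1]
      have hsgn : (-1 : ℝ) ^ (n + 1) = (-1 : ℝ) ^ (k + 1) * (-1 : ℝ) ^ (n - k) := by
        rw [← pow_add]; congr 1; omega
      have e : (-1 : ℝ) ^ (n + 1) * ((n.choose k : ℝ) *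
          (iteratedDeriv (k + 1) u x * iteratedDeriv (n - k) (fun y => Real.exp (u y)) x))
          = (n.choose k : ℝ) * (((-1 : ℝ) ^ (k + 1) * iteratedDeriv (k + 1) u x) *
            ((-1 : ℝ) ^ (n - k) * iteratedDeriv (n - k) (fun y => Real.exp (u y)) x)) := by
        rw [hsgn]; ring
      rw [e]
      exact mul_nonneg (Nat.cast_nonneg _)
        (mul_nonneg (hmono (k + 1) (Nat.succ_le_succ (Nat.zero_le _)) x hx)
          (ih (n - k) (by omega) x hx))

theorem linear_fraction_rpow_log_completely_monotone (a b c d x₀ : ℝ)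
    (ha : 0 < a)
    (hcase : (c = a ∧ d ≤ b) ∨ (0 < c ∧ c < a ∧ a * d - b * c ≤ 0))
    (g : ℝ → ℝ) (hg : CompletelyMonotoneOn g (Set.Ioi x₀)) :
    LogCompletelyMonotoneOn (fun x => ((a * x + b) / (c * x + d)) ^ g x)
      (Set.Ioi (max x₀ (-d / c))) ∧
    CompletelyMonotoneOn (fun x => ((a * x + b) / (c * x + d)) ^ g x)
      (Set.Ioi (max x₀ (-d / c))) := by
  have hc : 0 < c := by
    rcases hcase with ⟨h1, _⟩ | ⟨h1, _, _⟩
    · rw [h1]; exact ha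
    · exact h1
  have hca : c ≤ a := by
    rcases hcase with ⟨h1, _⟩ | ⟨_, h1, _⟩
    · rw [h1]
    · exact h1.le
  have hadbc : a * d ≤ b * c := by
    rcases hcase with ⟨h1, h2⟩ | ⟨_, _, h1⟩
    · rw [h1]; nlinarith
    · linarith
  set U : Set ℝ := Set.Ioi (max x₀ (-d / c)) with hUdef
  have hUopen : IsOpen U := isOpen_Ioi
  have hUsub : U ⊆ Set.Ioi x₀ := fun y hy => Set.mem_Ioi.mpr (lt_of_le_of_lt (le_max_left _ _) (Set.mem_Ioi.mp hy))
  have hcd : ∀ x ∈ U, 0 < c * x + d := by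
    intro x hx
    have h1 : -d / c < x := lt_of_le_of_lt (le_max_right _ _) hx
    have h2 : -d < x * c := (div_lt_iff₀ hc).mp h1
    linarith
  have hab : ∀ x ∈ U, 0 < a * x + b := by
    intro x hx
    have h1 := hcd x hx
    have h2 : 0 < a * (c * x + d) := mul_pos ha h1
    have h3 : a * (c * x + d) ≤ c * (a * x + b) := by nlinarith
    by_contra hcon
    push_neg at hcon
    nlinarith [mul_nonpos_of_nonneg_of_nonpos hc.le hcon]
  have hle : ∀ x ∈ U, c * x + d ≤ a * x + b := by
    intro x hx
    have h1 := hcd x hx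
    nlinarith [mul_nonneg (sub_nonneg.mpr hca) h1.le]
  have hdivle : ∀ x ∈ U, a / (a * x + b) ≤ c / (c * x + d) := by
    intro x hx
    rw [div_le_div_iff₀ (hab x hx) (hcd x hx)]
    nlinarith
  -- the auxiliary function u = g * log ratio
  set u : ℝ → ℝ := fun x => g x * (Real.log (a * x + b) - Real.log (c * x + d)) with hudef
  have hgU : ContDiffOn ℝ (⊤ : ℕ∞) g U := hg.1.mono hUsub
  have haff1 : ContDiff ℝ (⊤ : ℕ∞) fun x : ℝ => a * x + b :=
    (contDiff_const.mul contDiff_id).add contDiff_const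
  have haff2 : ContDiff ℝ (⊤ : ℕ∞) fun x : ℝ => c * x + d :=
    (contDiff_const.mul contDiff_id).add contDiff_const
  have hlab : ContDiffOn ℝ (⊤ : ℕ∞) (fun x => Real.log (a * x + b)) U :=
    haff1.contDiffOn.log fun x hx => (hab x hx).ne'
  have hlcd : ContDiffOn ℝ (⊤ : ℕ∞) (fun x => Real.log (c * x + d)) U :=
    haff2.contDiffOn.log fun x hx => (hcd x hx).ne'
  have hLs : ContDiffOn ℝ (⊤ : ℕ∞)
      (fun x => Real.log (a * x + b) - Real.log (c * x + d)) U := hlab.sub hlcd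
  have huS : ContDiffOn ℝ (⊤ : ℕ∞) u U := hgU.mul hLs
  have hgsign : ∀ k : ℕ, ∀ x ∈ U, 0 ≤ (-1 : ℝ) ^ k * iteratedDeriv k g x := by
    intro k x hx
    have h := hg.2 k x (hUsub hx)
    rwa [iteratedDerivWithin_of_isOpen' isOpen_Ioi (hUsub hx) k] at h
  have husign : ∀ n : ℕ, 1 ≤ n → ∀ x ∈ U, 0 ≤ (-1 : ℝ) ^ n * iteratedDeriv n u x := by
    intro n hn x hx
    rw [hudef, iteratedDeriv_mul_of_isOpen hUopen hgU hLs n x hx, Finset.mul_sum]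
    apply Finset.sum_nonneg
    intro k hk
    have hk' : k ≤ n := Nat.lt_succ_iff.mp (Finset.mem_range.mp hk)
    rcases Nat.eq_zero_or_eq_succ_pred (n - k) with hnk | hnk
    · -- k = n : last term, uses log ratio ≥ 0
      have hkn : k = n := by omega
      rw [hnk]
      have hlog : 0 ≤ Real.log (a * x + b) - Real.log (c * x + d) := by
        have := Real.log_le_log (hcd x hx) (hle x hx)
        linarith
      have e : (-1 : ℝ) ^ n * ((n.choose k : ℝ) * (iteratedDeriv k g x *
          iteratedDeriv 0 (fun x => Real.log (a * x + b) - Real.log (c * x + d)) x))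
          = (n.choose k : ℝ) * (((-1 : ℝ) ^ k * iteratedDeriv k g x) *
            (Real.log (a * x + b) - Real.log (c * x + d))) := by
        rw [iteratedDeriv_zero, hkn]; ring
      rw [e]
      exact mul_nonneg (Nat.cast_nonneg _) (mul_nonneg (hgsign k x hx) hlog)
    · -- n - k = m + 1 : use formula
      set m := (n - k).pred with hm
      rw [hnk, iteratedDeriv_logdiff a b c d m x (hab x hx) (hcd x hx)]
      have hA0 : 0 ≤ a / (a * x + b) := div_nonneg ha.le (hab x hx).le
      have hAC : (a / (a * x + b)) ^ (m + 1) ≤ (c / (c * x + d)) ^ (m + 1) :=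
        pow_le_pow_left₀ hA0 (hdivle x hx) (m + 1)
      have hsum : n = k + m + 1 := by omega
      have hsgn : (-1 : ℝ) ^ n = (-1 : ℝ) ^ k * (-1 : ℝ) ^ m * (-1 : ℝ) := by
        rw [hsum, pow_add, pow_add, pow_one]
      have e : (-1 : ℝ) ^ n * ((n.choose k : ℝ) * (iteratedDeriv k g x *
          ((-1 : ℝ) ^ m * (m.factorial : ℝ) *
            ((a / (a * x + b)) ^ (m + 1) - (c / (c * x + d)) ^ (m + 1)))))
          = ((n.choose k : ℝ) * (m.factorial : ℝ) *
              (((-1 : ℝ) ^ k * iteratedDeriv k g x))) *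
            ((c / (c * x + d)) ^ (m + 1) - (a / (a * x + b)) ^ (m + 1)) *
            ((-1 : ℝ) ^ m * (-1 : ℝ) ^ m) := by
        rw [hsgn]; ring
      have heven : (-1 : ℝ) ^ (m + m) = 1 := Even.neg_one_pow ⟨m, rfl⟩
      rw [e, ← pow_add, heven, mul_one]
      exact mul_nonneg (mul_nonneg (mul_nonneg (Nat.cast_nonneg _) (Nat.cast_nonneg _))
        (hgsign k x hx)) (sub_nonneg.mpr hAC)
  have hrpos : ∀ x ∈ U, 0 < (a * x + b) / (c * x + d) := fun x hx =>
    div_pos (hab x hx) (hcd x hx)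
  have hueq : Set.EqOn (fun x => Real.log (((a * x + b) / (c * x + d)) ^ g x)) u U := by
    intro x hx
    simp only [hudef]
    rw [Real.log_rpow (hrpos x hx), Real.log_div (hab x hx).ne' (hcd x hx).ne']
  have hfeq : Set.EqOn (fun x => ((a * x + b) / (c * x + d)) ^ g x)
      (fun x => Real.exp (u x)) U := by
    intro x hx
    simp only [hudef]
    rw [Real.rpow_def_of_pos (hrpos x hx), Real.log_div (hab x hx).ne' (hcd x hx).ne']
    ring_nf
  refine ⟨⟨fun x hx => Real.rpow_pos_of_pos (hrpos x hx) _, huS.congr hueq, ?_⟩,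
    (Real.contDiff_exp.comp_contDiffOn huS).congr hfeq, ?_⟩
  · intro n hn x hx
    rw [iteratedDerivWithin_congr hueq hx,
      iteratedDerivWithin_of_isOpen' hUopen hx n]
    exact husign n hn x hx
  · intro n x hx
    rw [iteratedDerivWithin_congr hfeq hx,
      iteratedDerivWithin_of_isOpen' hUopen hx n]
    exact exp_completely_monotone hUopen huS husign n x hx
end
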